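/- arXiv:1302.5919 — 8 statements merged into one kernel-verified Lean document; each statement's English description precedes it below -/
import Mathlib

section
/- Fix an infinite subset I ⊆ ℕ, integers n ≥ 3 and 1 ≤ m ≤ n − 2. Let β₁,…,β_n be I-supported elements of ∏_{i∈ℕ} ℚ≥0 that are linearly independent over ℚ, and let α ∈ ∏_{i∈ℕ} ℚ≥0 be an I-supported element with α = β_m + β_{m+1} + ⋯ + β_{n−1} − β_n. Then there exists β′ ∈ ∏_{i∈ℕ} ℚ≥0 such that the set Γ = {β₁,…,β_{m−1}, β_m − β′, β_{m+1},…,β_{n−1}, β_n − β′, β′} consists of I-supported elements of ∏_{i∈ℕ} ℚ≥0, is linearly independent over ℚ, and satisfies {β₁,…,β_n} ⊆ Σ_{γ∈Γ} ℚ≥0·γ. -/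
/-!
Take `β'` to be half of `min β_m β_n` plus a small bump at a coordinate `i₀ ∈ I` whose unit
vector lies outside the finite-dimensional span `V` of `β₁, …, β_n` (it exists because `I` is
infinite); of two bump heights at least one puts `β'` outside `V`. Then `β'` lies strictly between
`0` and `β_m, β_n` on `I`. Modulo `ℚ β'` the family `Γ \ {β'}` is just `β₁, …, β_n`, so `β' ∉ V`
makes `Γ` linearly independent, and each `β_i` is either in `Γ` or the sum of two of its elements.
-/

/-- An element `α ∈ ∏_{i ∈ ℕ} ℚ` is `I`-supported if `α i ≠ 0` for all `i ∈ I`. -/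
def ISupported (I : Set ℕ) (α : ℕ → ℚ) : Prop := ∀ i ∈ I, α i ≠ 0

/-- `α` lies in `∏_{i ∈ ℕ} ℚ≥0`: all components are nonnegative. -/
def NonnegSeq (α : ℕ → ℚ) : Prop := ∀ i, 0 ≤ α i

/-- `α ∈ ∏_{i ∈ ℕ} ℚ` is almost non-negative if only finitely many components are
negative. -/
def AlmostNonneg (α : ℕ → ℚ) : Prop := {i | α i < 0}.Finite

/-- `v ∈ Σ_{γ ∈ Γ} ℚ≥0 · γ`: `v` is a linear combination of the elements of the finite set
`Γ` with nonnegative rational coefficients. -/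
def InConeSpan (Γ : Finset (ℕ → ℚ)) (v : ℕ → ℚ) : Prop :=
  ∃ c : (ℕ → ℚ) → ℚ, (∀ γ, 0 ≤ c γ) ∧ v = ∑ γ ∈ Γ, c γ • γ

/-- `v ∈ Σ_{γ ∈ S} ℚ≥0 · γ` for a (possibly infinite) set `S`: `v` is a finite linear
combination of elements of `S` with nonnegative rational coefficients. -/
def InConeSpanSet (S : Set (ℕ → ℚ)) (v : ℕ → ℚ) : Prop :=
  ∃ Γ : Finset (ℕ → ℚ), (Γ : Set (ℕ → ℚ)) ⊆ S ∧ InConeSpan Γ v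

/-- The elements of the finite set `Γ` are linearly independent over `ℚ`. -/
def FinsetLinIndep (Γ : Finset (ℕ → ℚ)) : Prop :=
  LinearIndependent ℚ (fun γ : (Γ : Set (ℕ → ℚ)) => (γ : ℕ → ℚ))

/-- The elements of the set `S` are linearly independent over `ℚ`. -/
def SetLinIndep (S : Set (ℕ → ℚ)) : Prop :=
  LinearIndependent ℚ (fun γ : S => (γ : ℕ → ℚ))

open Submodule

theorem exists_single_notMem_of_infinite {ι K : Type*} [DecidableEq ι] [DivisionRing K] {I : Set ι}
    (hI : I.Infinite) (V : Submodule K (ι → K)) [FiniteDimensional K V] :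
    ∃ i ∈ I, Pi.single i 1 ∉ V := by
  by_contra! h
  have hind : LinearIndependent K fun i : I => (⟨Pi.single (i : ι) 1, h i i.2⟩ : V) :=
    .of_comp V.subtype <| (Pi.linearIndependent_single_one ι K).comp _ Subtype.val_injective
  exact hI (Cardinal.lt_aleph0_iff_set_finite.1 hind.lt_aleph0_of_finiteDimensional)

theorem add_smul_notMem_of_add_smul_mem {K M : Type*} [DivisionRing K] [AddCommGroup M]
    [Module K M] {V : Submodule K M} {v b : M} {s t : K} (hv : v ∉ V) (hst : s ≠ t)
    (hs : b + s • v ∈ V) : b + t • v ∉ V := fun ht => hv <| by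
  have := V.sub_mem hs ht
  rwa [add_sub_add_left_eq_sub, ← sub_smul, V.smul_mem_iff (sub_ne_zero.2 hst)] at this

theorem linearIndependent_sumElim_of_sub_mem_span_singleton {ι K M : Type*} [DivisionRing K]
    [AddCommGroup M] [Module K M] {v w : ι → M} {x : M} (hv : LinearIndependent K v)
    (hx : x ∉ span K (Set.range v)) (hw : ∀ i, w i - v i ∈ K ∙ x) :
    LinearIndependent K (Sum.elim (fun _ : Unit => x) w) := by
  have hx0 : x ≠ 0 := fun h => hx (h ▸ zero_mem _)
  have hwv : Submodule.Quotient.mk (p := K ∙ x) ∘ w = Submodule.Quotient.mk ∘ v :=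
    funext fun i => (Submodule.Quotient.eq _).2 (hw i)
  refine LinearIndependent.sumElim_of_quotient
    (f := fun _ : Unit => (⟨x, mem_span_singleton_self x⟩ : K ∙ x)) ?_ w ?_
  · exact linearIndependent_unique_iff.2 (by simpa using hx0)
  · rw [hwv]
    exact hv.map (f := (K ∙ x).mkQ) (by rw [ker_mkQ]; exact disjoint_span_singleton_of_notMem hx)

theorem exists_notMem_between_of_pos_on_infinite {ι K : Type*} [Field K] [LinearOrder K]
    [IsStrictOrderedRing K] {I : Set ι} (hI : I.Infinite) (V : Submodule K (ι → K))
    [FiniteDimensional K V] {u : ι → K} (hu : 0 ≤ u) (huI : ∀ i ∈ I, 0 < u i) :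
    ∃ b ∉ V, 0 ≤ b ∧ b ≤ u ∧ ∀ i ∈ I, 0 < b i ∧ b i < u i := by
  classical
  obtain ⟨i₀, hi₀, he⟩ := exists_single_notMem_of_infinite hI V
  have hc := huI i₀ hi₀
  set b : K → ι → K := fun t => (2⁻¹ : K) • u + t • Pi.single i₀ 1
  have hb : ∀ t k, b t k = u k / 2 + if k = i₀ then t else 0 := fun t k => by
    simp [b, Pi.single_apply, div_eq_inv_mul]
  have between : ∀ t, 0 < t → t < u i₀ / 2 →
      0 ≤ b t ∧ b t ≤ u ∧ ∀ i ∈ I, 0 < b t i ∧ b t i < u i := by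
    intro t ht0 ht
    have hk : ∀ k, 0 ≤ b t k ∧ b t k ≤ u k ∧ (0 < u k → 0 < b t k ∧ b t k < u k) := by
      intro k
      rw [hb]
      split_ifs with hki
      · subst hki; refine ⟨?_, ?_, fun _ => ⟨?_, ?_⟩⟩ <;> linarith
      · have : 0 ≤ u k := hu k; refine ⟨?_, ?_, fun _ => ⟨?_, ?_⟩⟩ <;> linarith
    exact ⟨fun k => (hk k).1, fun k => (hk k).2.1, fun i hi => (hk i).2.2 (huI i hi)⟩
  by_cases h : b (u i₀ / 4) ∈ V
  · exact ⟨_, add_smul_notMem_of_add_smul_mem he (by linarith) h,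
      between (u i₀ / 8) (by positivity) (by linarith)⟩
  · exact ⟨_, h, between (u i₀ / 4) (by positivity) (by linarith)⟩

theorem NonnegSeq.pos_of_iSupported {I : Set ℕ} {a : ℕ → ℚ} (h0 : NonnegSeq a)
    (hI : ISupported I a) : ∀ i ∈ I, 0 < a i :=
  fun i hi => (h0 i).lt_of_ne' (hI i hi)

theorem nonnegSeq_sub_and_iSupported_sub {I : Set ℕ} {a b : ℕ → ℚ} (hle : b ≤ a)
    (hlt : ∀ i ∈ I, b i < a i) : NonnegSeq (a - b) ∧ ISupported I (a - b) :=
  ⟨fun k => sub_nonneg.2 (hle k), fun k hk => (sub_pos.2 (hlt k hk)).ne'⟩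

theorem inConeSpanSet_of_mem {S : Set (ℕ → ℚ)} {v : ℕ → ℚ} (hv : v ∈ S) : InConeSpanSet S v :=
  ⟨{v}, by simpa using hv, fun _ => 1, fun _ => zero_le_one, by simp⟩

theorem InConeSpanSet.add {S : Set (ℕ → ℚ)} {u v : ℕ → ℚ} (hu : InConeSpanSet S u)
    (hv : InConeSpanSet S v) : InConeSpanSet S (u + v) := by
  classical
  obtain ⟨Γ, hΓ, c, hc, rfl⟩ := hu
  obtain ⟨Δ, hΔ, d, hd, rfl⟩ := hv
  refine ⟨Γ ∪ Δ, by simpa using And.intro hΓ hΔ,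
    fun γ => (if γ ∈ Γ then c γ else 0) + (if γ ∈ Δ then d γ else 0),
    fun γ => add_nonneg (by split_ifs <;> simp [hc]) (by split_ifs <;> simp [hd]), ?_⟩
  simp only [add_smul, Finset.sum_add_distrib, ite_smul, zero_smul]
  rw [Finset.sum_ite_mem, Finset.sum_ite_mem, Finset.union_inter_cancel_left,
    Finset.union_inter_cancel_right]

theorem setLinIndep_image_union_singleton {s : Finset ℕ} {β g : ℕ → ℕ → ℚ} {β' : ℕ → ℚ}
    (hind : LinearIndependent ℚ fun i : s => β i) (hβ' : β' ∉ span ℚ (Set.range fun i : s => β i))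
    (hg : ∀ i, g i = β i ∨ g i = β i - β') : SetLinIndep (g '' s ∪ {β'}) := by
  have hw : ∀ i : s, g i - β i ∈ ℚ ∙ β' := fun i => by rcases hg i with h | h <;> simp [h]
  have := (linearIndependent_sumElim_of_sub_mem_span_singleton hind hβ' hw).linearIndepOn_id
  rw [Set.Sum.elim_range, Set.range_const, Set.union_comm] at this
  rwa [SetLinIndep, Set.image_eq_range]

theorem inConeSpanSet_image_union_singleton {s : Set ℕ} {β g : ℕ → ℕ → ℚ} {β' : ℕ → ℚ} {i : ℕ}
    (hi : i ∈ s) (hg : g i = β i ∨ g i = β i - β') : InConeSpanSet (g '' s ∪ {β'}) (β i) := by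
  have hgΓ : g i ∈ g '' s ∪ {β'} := .inl ⟨i, hi, rfl⟩
  rcases hg with h | h
  · exact h ▸ inConeSpanSet_of_mem hgΓ
  · simpa [h] using (inConeSpanSet_of_mem hgΓ).add (inConeSpanSet_of_mem (.inr rfl))

theorem exists_prime_element_splitting_general
    (I : Set ℕ) (hI : I.Infinite) (n m : ℕ) (hm : 1 ≤ m) (hmn : m + 2 ≤ n)
    (β : ℕ → (ℕ → ℚ))
    (hβ : ∀ i ∈ Finset.Icc 1 n, NonnegSeq (β i) ∧ ISupported I (β i))
    (hind : LinearIndependent ℚ (fun i : (Finset.Icc 1 n : Finset ℕ) => β i)) :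
    ∃ β' : ℕ → ℚ, NonnegSeq β' ∧
      ∀ Γ : Set (ℕ → ℚ),
        Γ = ((fun i => if i = m then β m - β' else if i = n then β n - β' else β i) ''
              (Set.Icc 1 n)) ∪ {β'} →
        (∀ γ ∈ Γ, NonnegSeq γ ∧ ISupported I γ) ∧ SetLinIndep Γ ∧
          ∀ i ∈ Finset.Icc 1 n, InConeSpanSet Γ (β i) := by
  have hpos : ∀ j ∈ Finset.Icc 1 n, ∀ i ∈ I, 0 < β j i := fun j hj =>
    (hβ j hj).1.pos_of_iSupported (hβ j hj).2
  have hmI : m ∈ Finset.Icc 1 n := Finset.mem_Icc.2 ⟨hm, by omega⟩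
  have hnI : n ∈ Finset.Icc 1 n := Finset.mem_Icc.2 ⟨by omega, le_rfl⟩
  have := FiniteDimensional.span_of_finite ℚ (Set.finite_range fun i : Finset.Icc 1 n => β i)
  obtain ⟨β', hβ'V, hβ'0, hβ'le, hβ'I⟩ :=
    exists_notMem_between_of_pos_on_infinite hI (span ℚ (Set.range fun i : Finset.Icc 1 n => β i))
      (u := fun k => min (β m k) (β n k)) (fun k => le_min ((hβ m hmI).1 k) ((hβ n hnI).1 k))
      (fun i hi => lt_min (hpos m hmI i hi) (hpos n hnI i hi))
  refine ⟨β', hβ'0, ?_⟩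
  set g : ℕ → ℕ → ℚ := fun i => if i = m then β m - β' else if i = n then β n - β' else β i
  have hsplit : ∀ i, g i = β i ∨ (g i = β i - β' ∧ β' ≤ β i ∧ ∀ k ∈ I, β' k < β i k) := by
    intro i
    by_cases him : i = m
    · subst him
      exact .inr ⟨if_pos rfl, fun k => (hβ'le k).trans (min_le_left _ _),
        fun k hk => (hβ'I k hk).2.trans_le (min_le_left _ _)⟩
    by_cases hin : i = n
    · subst hin
      exact .inr ⟨by simp [g, him], fun k => (hβ'le k).trans (min_le_right _ _),
        fun k hk => (hβ'I k hk).2.trans_le (min_le_right _ _)⟩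
    exact .inl (by simp [g, him, hin])
  rintro Γ rfl
  rw [← Finset.coe_Icc]
  refine ⟨?_, setLinIndep_image_union_singleton hind hβ'V fun i => (hsplit i).imp_right And.left,
    fun i hi => inConeSpanSet_image_union_singleton hi ((hsplit i).imp_right And.left)⟩
  rintro γ (⟨i, hi, rfl⟩ | rfl)
  · rcases hsplit i with h | ⟨h, hle, hlt⟩ <;> rw [h]
    · exact hβ i hi
    · exact nonnegSeq_sub_and_iSupported_sub hle hlt
  · exact ⟨hβ'0, fun i hi => (hβ'I i hi).1.ne'⟩

/-- Fix an infinite `I ⊆ ℕ`, `n ≥ 3` and `1 ≤ m ≤ n - 2`.  Let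
`β₁, …, β_n` be `I`-supported elements of `∏_{i ∈ ℕ} ℚ≥0`, linearly independent over `ℚ`,
and `α ∈ ∏_{i ∈ ℕ} ℚ≥0` an `I`-supported element with
`α = β_m + β_{m+1} + ⋯ + β_{n-1} - β_n`.  Then there is `β′ ∈ ∏_{i ∈ ℕ} ℚ≥0` such that
`Γ = {β₁, …, β_{m-1}, β_m - β′, β_{m+1}, …, β_{n-1}, β_n - β′, β′}` consists of
`I`-supported elements of `∏_{i ∈ ℕ} ℚ≥0`, is linearly independent over `ℚ`, and
`{β₁, …, β_n} ⊆ Σ_{γ ∈ Γ} ℚ≥0 · γ`. -/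
theorem exists_prime_element_splitting
    (I : Set ℕ) (hI : I.Infinite) (n m : ℕ) (hn : 3 ≤ n) (hm : 1 ≤ m) (hmn : m + 2 ≤ n)
    (β : ℕ → (ℕ → ℚ))
    (hβ : ∀ i ∈ Finset.Icc 1 n, NonnegSeq (β i) ∧ ISupported I (β i))
    (hind : LinearIndependent ℚ (fun i : (Finset.Icc 1 n : Finset ℕ) => β i))
    (α : ℕ → ℚ) (hα : NonnegSeq α ∧ ISupported I α)
    (heq : α = (∑ i ∈ Finset.Icc m (n - 1), β i) - β n) :
    ∃ β' : ℕ → ℚ, NonnegSeq β' ∧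
      ∀ Γ : Set (ℕ → ℚ),
        Γ = ((fun i => if i = m then β m - β' else if i = n then β n - β' else β i) ''
              (Set.Icc 1 n)) ∪ {β'} →
        (∀ γ ∈ Γ, NonnegSeq γ ∧ ISupported I γ) ∧ SetLinIndep Γ ∧
          ∀ i ∈ Finset.Icc 1 n, InConeSpanSet Γ (β i) :=
  exists_prime_element_splitting_general I hI n m hm hmn β hβ hind
end

section
/- Fix an infinite subset I ⊆ ℕ. Let β₁,…,β_n be I-supported elements of ∏_{i∈ℕ} ℚ≥0 that are linearly independent over ℚ, and let α ∈ ∏_{i∈ℕ} ℚ≥0 be an I-supported element with α = η₁β₁ + ⋯ + η_{n−1}β_{n−1} − β_n, where each η_i ∈ {0,1}. Then there exists a finite set Γ ⊆ ∏_{i∈ℕ} ℚ≥0 of I-supported elements that is linearly independent over ℚ and satisfies {α, β₁,…,β_n} ⊆ Σ_{γ∈Γ} ℚ≥0·γ. -/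
/-!
Put `S = {i < n | η i = 1}`, so that `α + β n = ∑_{l ∈ S} β l`. Splitting each `β l` (`l ∈ S`)
pointwise in the ratio `α : β n` gives `β l = u l + v l` with `∑ u l = α` and `∑ v l = β n`, all
nonnegative and `I`-supported. The family `{β i | i ∉ S} ∪ {u l, v l | l ∈ S}` need not be
independent, so a small `ε τ l` is moved from `v l` to `u l`, where the `τ l` sum to zero, satisfy
only constant linear relations, and live on coordinates of `I` outside a finite set of coordinates
that already determines every vector in the span of the `β i` and `u l`. A linear relation in the
perturbed family then collapses to one among `α` and the `β i` with `i < n`; these are independent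
because `β n` is not in the span of those `β i` while `α + β n` is.
-/

open Filter Topology Submodule

def NonnegISupported (I : Set ℕ) (f : ℕ → ℚ) : Prop := NonnegSeq f ∧ ISupported I f

namespace NonnegISupported

variable {I : Set ℕ} {f g : ℕ → ℚ}

theorem pos (hf : NonnegISupported I f) {x : ℕ} (hx : x ∈ I) : 0 < f x :=
  (hf.1 x).lt_of_ne (hf.2 x hx).symm

theorem mul (hf : NonnegISupported I f) (hg : NonnegISupported I g) :
    NonnegISupported I (f * g) :=
  ⟨fun x => mul_nonneg (hf.1 x) (hg.1 x), fun x hx => mul_ne_zero (hf.2 x hx) (hg.2 x hx)⟩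

theorem div_add (hf : NonnegISupported I f) (hg : NonnegISupported I g) :
    NonnegISupported I (f / (f + g)) ∧ NonnegISupported I (1 - f / (f + g)) := by
  have hsum x : 0 ≤ f x + g x := add_nonneg (hf.1 x) (hg.1 x)
  refine ⟨⟨fun x => ?_, fun x hx => ?_⟩, ⟨fun x => ?_, fun x hx => ?_⟩⟩ <;>
    simp only [Pi.div_apply, Pi.add_apply, Pi.sub_apply, Pi.one_apply]
  · exact div_nonneg (hf.1 x) (hsum x)
  · exact div_ne_zero (hf.2 x hx) (add_pos (hf.pos hx) (hg.pos hx)).ne'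
  · exact sub_nonneg.2 (div_le_one_of_le₀ (le_add_of_nonneg_right (hg.1 x)) (hsum x))
  · exact sub_ne_zero.2
      ((div_lt_one (add_pos (hf.pos hx) (hg.pos hx))).2 (lt_add_of_pos_right _ (hg.pos hx))).ne'

theorem eventually_add_smul (hf : NonnegISupported I f) (hg : (Function.support g).Finite)
    (hgI : Function.support g ⊆ I) :
    ∀ᶠ ε in 𝓝 (0 : ℚ), NonnegISupported I (f + ε • g) := by
  have hpos : ∀ x ∈ Function.support g, ∀ᶠ ε in 𝓝 (0 : ℚ), 0 < f x + ε * g x := by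
    intro x hx
    refine Tendsto.eventually_const_lt (hf.pos (hgI hx)) ?_
    simpa using (tendsto_id (x := 𝓝 (0 : ℚ))).mul_const (g x) |>.const_add (f x)
  filter_upwards [(eventually_all_finite hg).2 hpos] with ε hε
  have key x : 0 ≤ (f + ε • g) x ∧ (x ∈ I → (f + ε • g) x ≠ 0) := by
    simp only [Pi.add_apply, Pi.smul_apply, smul_eq_mul]
    by_cases hx : g x = 0
    · simpa [hx] using ⟨hf.1 x, hf.2 x⟩
    · exact ⟨(hε x hx).le, fun _ => (hε x hx).ne'⟩
  exact ⟨fun x => (key x).1, fun x hx => (key x).2 hx⟩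

end NonnegISupported

namespace InConeSpan

variable {Γ : Finset (ℕ → ℚ)}

theorem of_mem {γ : ℕ → ℚ} (hγ : γ ∈ Γ) : InConeSpan Γ γ := by
  classical
  refine ⟨fun x => if x = γ then 1 else 0, fun x => by dsimp only; split_ifs <;> norm_num, ?_⟩
  simp [ite_smul, hγ]

theorem zero : InConeSpan Γ 0 := ⟨0, fun _ => le_rfl, by simp⟩

theorem add {v w : ℕ → ℚ} (hv : InConeSpan Γ v) (hw : InConeSpan Γ w) : InConeSpan Γ (v + w) := by
  obtain ⟨c, hc, rfl⟩ := hv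
  obtain ⟨d, hd, rfl⟩ := hw
  exact ⟨c + d, fun γ => add_nonneg (hc γ) (hd γ), by simp [add_smul, Finset.sum_add_distrib]⟩

theorem sum {ι : Type*} {s : Finset ι} {v : ι → ℕ → ℚ} (hv : ∀ i ∈ s, InConeSpan Γ (v i)) :
    InConeSpan Γ (∑ i ∈ s, v i) :=
  Finset.sum_induction _ _ (fun _ _ => add) zero hv

end InConeSpan

theorem finsetLinIndep_image {ι : Type*} [DecidableEq (ℕ → ℚ)] {G : ι → ℕ → ℚ} {s : Finset ι}
    (hG : LinearIndepOn ℚ G s) : FinsetLinIndep (s.image G) := by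
  rw [FinsetLinIndep, Finset.coe_image]
  exact hG.id_image

theorem Finset.sum_smul_eq_sum_filter_of_forall_eq_zero_or_eq_one {ι R M : Type*} [Semiring R]
    [DecidableEq R] [AddCommMonoid M] [Module R M] {s : Finset ι} {η : ι → R}
    (hη : ∀ i ∈ s, η i = 0 ∨ η i = 1) (f : ι → M) :
    ∑ i ∈ s, η i • f i = ∑ i ∈ s with η i = 1, f i := by
  rw [Finset.sum_filter]
  refine Finset.sum_congr rfl fun i hi => ?_
  split_ifs with h
  · rw [h, one_smul]
  · rw [(hη i hi).resolve_right h, zero_smul]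

theorem Submodule.exists_finset_eq_zero_of_forall_apply_eq_zero {K ι : Type*} [Field K]
    (W : Submodule K (ι → K)) [FiniteDimensional K W] :
    ∃ D : Finset ι, ∀ w ∈ W, (∀ i ∈ D, w i = 0) → w = 0 := by
  classical
  let Z (D : Finset ι) : Submodule K W := ⨅ i ∈ D, LinearMap.ker (LinearMap.proj i ∘ₗ W.subtype)
  have mem_Z {D : Finset ι} {w : W} : w ∈ Z D ↔ ∀ i ∈ D, (w : ι → K) i = 0 := by
    simp [Z, Submodule.mem_iInf]
  -- A minimal subspace of `W` cut out by finitely many coordinates must be zero.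
  obtain ⟨_, ⟨D, rfl⟩, hmin⟩ := IsArtinian.set_has_minimal (Set.range Z) (Set.range_nonempty _)
  refine ⟨D, fun w hw hD => by_contra fun hne => ?_⟩
  obtain ⟨i, hi⟩ := Function.ne_iff.mp hne
  refine hmin (Z (insert i D)) ⟨_, rfl⟩
    (SetLike.lt_iff_le_and_exists.mpr ⟨fun v hv => ?_, ⟨w, hw⟩, mem_Z.mpr hD, fun h => ?_⟩)
  · exact mem_Z.mpr fun x hx => mem_Z.mp hv x (Finset.mem_insert_of_mem hx)
  · exact hi (mem_Z.mp h i (Finset.mem_insert_self i D))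

section BalancedPerturbation

variable {K ι κ : Type*} [Field K] [DecidableEq ι] (S : Finset κ) (j : κ → ι)

noncomputable def balancedPerturbation (l : κ) : ι → K :=
  (S.card : K) • Pi.single (j l) 1 - ∑ m ∈ S, Pi.single (j m) 1

theorem sum_balancedPerturbation : ∑ l ∈ S, balancedPerturbation (K := K) S j l = 0 := by
  simp only [balancedPerturbation, Finset.sum_sub_distrib, ← Finset.smul_sum, Finset.sum_const,
    ← Nat.cast_smul_eq_nsmul K, sub_self]

variable {S j}

theorem balancedPerturbation_apply_of_notMem {l : κ} (hl : l ∈ S) {x : ι} (hx : x ∉ j '' S) :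
    balancedPerturbation (K := K) S j l x = 0 := by
  have hne : ∀ m ∈ S, x ≠ j m := fun m hm h => hx ⟨m, hm, h.symm⟩
  simp [balancedPerturbation, Pi.single_apply, hne l hl, Finset.sum_ite_of_false (hne · ·)]

theorem balancedPerturbation_apply_apply [DecidableEq κ] (hj : Set.InjOn j S) {l p : κ}
    (hl : l ∈ S) (hp : p ∈ S) :
    balancedPerturbation (K := K) S j l (j p) = S.card * (if l = p then 1 else 0) - 1 := by
  simp only [balancedPerturbation, Pi.sub_apply, Pi.smul_apply, Finset.sum_apply, Pi.single_apply,
    smul_eq_mul, hj.eq_iff hp hl]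
  rw [Finset.sum_congr rfl fun m hm => if_congr (hj.eq_iff hp hm) rfl rfl]
  simp [hp, eq_comm]

theorem exists_eq_of_sum_smul_balancedPerturbation_eq_zero [CharZero K] (hj : Set.InjOn j S)
    {d : κ → K} (h : ∑ l ∈ S, d l • balancedPerturbation (K := K) S j l = 0) :
    ∃ c, ∀ l ∈ S, d l = c := by
  classical
  refine ⟨(∑ l ∈ S, d l) / S.card, fun p hp => ?_⟩
  have hk : (S.card : K) ≠ 0 := Nat.cast_ne_zero.2 (Finset.card_ne_zero_of_mem hp)
  have hjp := congrFun h (j p)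
  simp only [Finset.sum_apply, Pi.smul_apply, smul_eq_mul, Pi.zero_apply] at hjp
  rw [Finset.sum_congr rfl fun l hl => by rw [balancedPerturbation_apply_apply hj hl hp]] at hjp
  simp only [mul_sub, mul_ite, mul_one, mul_zero, Finset.sum_sub_distrib, Finset.sum_ite_eq',
    if_pos hp, sub_eq_zero] at hjp
  rw [eq_div_iff hk]
  linear_combination hjp

end BalancedPerturbation

theorem LinearIndepOn.eq_zero_of_sum_sdiff_add_sum_add_smul_eq_zero {K V ι : Type*} [Field K]
    [AddCommGroup V] [Module K V] [DecidableEq ι] {v : ι → V} {U S : Finset ι} (hSU : S ⊆ U)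
    {x : V} (hv : LinearIndepOn K v U) (hx : x ∉ span K (v '' U)) {g b : ι → K} {c : K}
    (h : ∑ i ∈ U \ S, g i • v i + ∑ i ∈ S, b i • v i + c • x = 0) :
    (∀ i ∈ U \ S, g i = 0) ∧ (∀ i ∈ S, b i = 0) ∧ c = 0 := by
  have hφ : ∑ i ∈ U \ S, g i • v i + ∑ i ∈ S, b i • v i = ∑ i ∈ U, S.piecewise b g i • v i := by
    rw [← Finset.sum_sdiff hSU]
    congr 1 <;> refine Finset.sum_congr rfl fun i hi => ?_
    · rw [Finset.piecewise_eq_of_notMem _ _ _ (Finset.mem_sdiff.mp hi).2]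
    · rw [Finset.piecewise_eq_of_mem _ _ _ hi]
  rw [hφ] at h
  have hc : c = 0 := by
    by_contra hc
    refine hx ((smul_mem_iff _ hc).mp ?_)
    rw [eq_neg_of_add_eq_zero_right h]
    exact neg_mem (sum_mem fun i hi => smul_mem _ _ (subset_span (Set.mem_image_of_mem v hi)))
  subst hc
  have h0 := linearIndepOn_finset_iff.mp hv _ (by simpa using h)
  refine ⟨fun i hi => ?_, fun i hi => ?_, rfl⟩
  · simpa [Finset.piecewise_eq_of_notMem _ _ _ (Finset.mem_sdiff.mp hi).2] using
      h0 i (Finset.sdiff_subset hi)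
  · simpa [Finset.piecewise_eq_of_mem _ _ _ hi] using h0 i (hSU hi)

section SplitFamily

variable {ι V : Type*} [DecidableEq ι]

def splitFamily [AddCommGroup V] (β p : ι → V) : ι ⊕ ι ⊕ ι → V :=
  Sum.elim β (Sum.elim p (β - p))

def splitIndex (U S : Finset ι) : Finset (ι ⊕ ι ⊕ ι) :=
  (U \ S).disjSum (S.disjSum S)

theorem forall_mem_image_splitFamily [AddCommGroup V] [DecidableEq V] {P : V → Prop}
    {U S : Finset ι} {β p : ι → V} (hβ : ∀ i ∈ U \ S, P (β i))
    (hp : ∀ l ∈ S, P (p l) ∧ P (β l - p l)) :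
    ∀ γ ∈ (splitIndex U S).image (splitFamily β p), P γ := by
  simp only [Finset.forall_mem_image, splitIndex, splitFamily]
  rintro (i | l | l) hx <;> simp only [Finset.inl_mem_disjSum, Finset.inr_mem_disjSum] at hx
  · exact hβ i hx
  · exact (hp l hx).1
  · exact (hp l hx).2

/-- A relation in the family forces its coefficients on `u l + t l` and `β l - (u l + t l)` to
differ by a constant `c` (freshness of `t`), and since `∑ t = 0` and `∑ u = α` what remains is a
relation among `α` and the `β i`. -/
theorem linearIndepOn_splitFamily {K : Type*} [Field K] [AddCommGroup V] [Module K V]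
    {U S : Finset ι} (hSU : S ⊆ U) {β u t : ι → V} {α : V} (W : Submodule K V)
    (hβ : LinearIndepOn K β U) (hα : α ∉ span K (β '' U)) (hβW : ∀ i ∈ U, β i ∈ W)
    (huW : ∀ l ∈ S, u l ∈ W) (hu : ∑ l ∈ S, u l = α) (ht : ∑ l ∈ S, t l = 0)
    (ht_fresh : ∀ d : ι → K, ∑ l ∈ S, d l • t l ∈ W → ∃ c, ∀ l ∈ S, d l = c) :
    LinearIndepOn K (splitFamily β (u + t)) (splitIndex U S) := by
  refine linearIndepOn_finset_iff.mpr fun f hf => ?_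
  simp only [splitIndex, splitFamily, Finset.sum_disjSum, Sum.elim_inl, Sum.elim_inr,
    Pi.add_apply, Pi.sub_apply] at hf
  set g := fun i => f (Sum.inl i)
  set a := fun l => f (Sum.inr (Sum.inl l))
  set b := fun l => f (Sum.inr (Sum.inr l))
  set w := ∑ i ∈ U \ S, g i • β i + ∑ l ∈ S, b l • β l + ∑ l ∈ S, (a - b) l • u l
  have hsplit : w + ∑ l ∈ S, (a - b) l • t l = 0 := by
    rw [← hf]
    simp only [w, Pi.sub_apply, sub_smul, smul_add, smul_sub, Finset.sum_add_distrib,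
      Finset.sum_sub_distrib]
    abel
  have hw : w ∈ W := add_mem (add_mem
    (sum_mem fun i hi => smul_mem _ _ (hβW i (Finset.sdiff_subset hi)))
    (sum_mem fun l hl => smul_mem _ _ (hβW l (hSU hl))))
    (sum_mem fun l hl => smul_mem _ _ (huW l hl))
  obtain ⟨c, hc⟩ := ht_fresh (a - b)
    (by rw [eq_neg_of_add_eq_zero_right hsplit]; exact neg_mem hw)
  have hconst (v : ι → V) : ∑ l ∈ S, (a - b) l • v l = c • ∑ l ∈ S, v l := by
    rw [Finset.smul_sum]; exact Finset.sum_congr rfl fun l hl => by rw [hc l hl]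
  rw [hconst, ht, smul_zero, add_zero] at hsplit
  have hrel : ∑ i ∈ U \ S, g i • β i + ∑ l ∈ S, b l • β l + c • α = 0 := by
    rw [← hu, ← hconst]; exact hsplit
  obtain ⟨hg0, hb0, hc0⟩ := hβ.eq_zero_of_sum_sdiff_add_sum_add_smul_eq_zero hSU hα hrel
  rintro (i | l | l) hx <;>
    simp only [splitIndex, Finset.inl_mem_disjSum, Finset.inr_mem_disjSum] at hx
  · exact hg0 i hx
  · simpa [hc0, hb0 l hx] using hc l hx
  · exact hb0 l hx

end SplitFamily

section Construction

variable {I : Set ℕ}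

theorem exists_proportional_split {ι : Type*} {S : Finset ι} {α b : ℕ → ℚ} {β : ι → ℕ → ℚ}
    (hα : NonnegISupported I α) (hb : NonnegISupported I b)
    (hβ : ∀ l ∈ S, NonnegISupported I (β l)) (h : α + b = ∑ l ∈ S, β l) :
    ∃ u : ι → ℕ → ℚ, ∑ l ∈ S, u l = α ∧
      ∀ l ∈ S, NonnegISupported I (u l) ∧ NonnegISupported I (β l - u l) := by
  obtain ⟨hw, hw'⟩ := hα.div_add hb
  refine ⟨fun l => α / (α + b) * β l, ?_, fun l hl => ⟨hw.mul (hβ l hl), ?_⟩⟩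
  · rw [← Finset.mul_sum, ← h]
    funext x
    exact div_mul_cancel_of_imp fun h0 => by
      rw [Pi.add_apply] at h0; linarith [hα.1 x, hb.1 x]
  · rw [show β l - α / (α + b) * β l = (1 - α / (α + b)) * β l by ring]
    exact hw'.mul (hβ l hl)

theorem exists_balanced_perturbation (hI : I.Infinite) (W : Submodule ℚ (ℕ → ℚ))
    [FiniteDimensional ℚ W] {S : Finset ℕ} {f g : ℕ → ℕ → ℚ}
    (hfg : ∀ l ∈ S, NonnegISupported I (f l) ∧ NonnegISupported I (g l)) :
    ∃ t : ℕ → ℕ → ℚ, ∑ l ∈ S, t l = 0 ∧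
      (∀ d : ℕ → ℚ, ∑ l ∈ S, d l • t l ∈ W → ∃ c, ∀ l ∈ S, d l = c) ∧
      ∀ l ∈ S, NonnegISupported I (f l + t l) ∧ NonnegISupported I (g l - t l) := by
  obtain ⟨D, hD⟩ := W.exists_finset_eq_zero_of_forall_apply_eq_zero
  have hID : (I \ D).Infinite := hI.sdiff D.finite_toSet
  let j : ℕ → ℕ := fun l => hID.natEmbedding _ l
  have hjID : ∀ l, j l ∈ I \ D := fun l => (hID.natEmbedding _ l).2
  have hj : Set.InjOn j S := (Subtype.val_injective.comp (hID.natEmbedding _).injective).injOn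
  let τ := balancedPerturbation (K := ℚ) S j
  have hτ : ∀ l ∈ S, Function.support (τ l) ⊆ j '' S := fun l hl x hx =>
    by_contra fun h => hx (balancedPerturbation_apply_of_notMem hl h)
  have hjS : (j '' S).Finite ∧ j '' S ⊆ I :=
    ⟨S.finite_toSet.image j, Set.image_subset_iff.2 fun l _ => (hjID l).1⟩
  have hev : ∀ᶠ ε in 𝓝 (0 : ℚ), ∀ l ∈ S,
      NonnegISupported I (f l + ε • τ l) ∧ NonnegISupported I (g l + ε • -τ l) := by
    refine (eventually_all_finset S).2 fun l hl => ?_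
    have hτ' : Function.support (-τ l) ⊆ j '' S := by rw [Function.support_neg]; exact hτ l hl
    exact ((hfg l hl).1.eventually_add_smul (hjS.1.subset (hτ l hl)) ((hτ l hl).trans hjS.2)).and
      ((hfg l hl).2.eventually_add_smul (hjS.1.subset hτ') (hτ'.trans hjS.2))
  obtain ⟨ε, hε, hε0⟩ :=
    ((hev.filter_mono nhdsWithin_le_nhds).and (self_mem_nhdsWithin (s := {0}ᶜ))).exists
  refine ⟨fun l => ε • τ l, ?_, fun d hd => ?_, fun l hl => ?_⟩
  · rw [← Finset.smul_sum, sum_balancedPerturbation, smul_zero]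
  · have hzero : ∑ l ∈ S, (d l * ε) • τ l = 0 := by
      simp_rw [mul_smul]
      refine hD _ hd fun x hx => ?_
      simp only [Finset.sum_apply, Pi.smul_apply, smul_eq_mul]
      refine Finset.sum_eq_zero fun l hl => ?_
      have hτx : τ l x = 0 :=
        balancedPerturbation_apply_of_notMem hl fun ⟨m, _, hm⟩ => (hjID m).2 (hm ▸ hx)
      rw [hτx, mul_zero, mul_zero]
    obtain ⟨c, hc⟩ := exists_eq_of_sum_smul_balancedPerturbation_eq_zero hj hzero
    exact ⟨c / ε, fun l hl => by rw [← hc l hl, mul_div_cancel_right₀ _ hε0]⟩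
  · simpa [sub_eq_add_neg] using hε l hl

theorem exists_independent_cone_of_split (hI : I.Infinite) {U S : Finset ℕ} (hSU : S ⊆ U)
    {β u : ℕ → ℕ → ℚ} {α : ℕ → ℚ} (hβ : LinearIndepOn ℚ β U) (hα : α ∉ span ℚ (β '' U))
    (hu : ∑ l ∈ S, u l = α) (hβI : ∀ i ∈ U \ S, NonnegISupported I (β i))
    (huI : ∀ l ∈ S, NonnegISupported I (u l) ∧ NonnegISupported I (β l - u l)) :
    ∃ Γ : Finset (ℕ → ℚ), (∀ γ ∈ Γ, NonnegISupported I γ) ∧ FinsetLinIndep Γ ∧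
      InConeSpan Γ α ∧ InConeSpan Γ ((∑ l ∈ S, β l) - α) ∧ ∀ i ∈ U, InConeSpan Γ (β i) := by
  classical
  let W := span ℚ (↑(U.image β ∪ S.image u) : Set (ℕ → ℚ))
  have hβW : ∀ i ∈ U, β i ∈ W := fun i hi =>
    subset_span (Finset.mem_coe.2 (Finset.mem_union_left _ (Finset.mem_image_of_mem β hi)))
  have huW : ∀ l ∈ S, u l ∈ W := fun l hl =>
    subset_span (Finset.mem_coe.2 (Finset.mem_union_right _ (Finset.mem_image_of_mem u hl)))
  obtain ⟨t, ht, ht_fresh, htI⟩ := exists_balanced_perturbation hI W huI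
  set Γ := (splitIndex U S).image (splitFamily β (u + t))
  have hcone : ∀ x ∈ splitIndex U S, InConeSpan Γ (splitFamily β (u + t) x) :=
    fun x hx => .of_mem (Finset.mem_image_of_mem _ hx)
  refine ⟨Γ, forall_mem_image_splitFamily hβI fun l hl => ⟨(htI l hl).1, ?_⟩,
    finsetLinIndep_image (linearIndepOn_splitFamily hSU W hβ hα hβW huW hu ht ht_fresh),
    ?_, ?_, fun i hi => ?_⟩
  · simpa [sub_sub] using (htI l hl).2
  · rw [← hu, ← add_zero (∑ l ∈ S, u l), ← ht, ← Finset.sum_add_distrib]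
    exact .sum fun l hl => hcone (.inr (.inl l)) (by simp [splitIndex, hl])
  · rw [← hu, ← add_zero (∑ l ∈ S, u l), ← ht, ← Finset.sum_add_distrib,
      ← Finset.sum_sub_distrib]
    exact .sum fun l hl => hcone (.inr (.inr l)) (by simp [splitIndex, hl])
  · by_cases hiS : i ∈ S
    · rw [← add_sub_cancel (u i + t i) (β i)]
      exact (hcone (.inr (.inl i)) (by simp [splitIndex, hiS])).add
        (hcone (.inr (.inr i)) (by simp [splitIndex, hiS]))
    · exact hcone (.inl i) (by simp [splitIndex, hi, hiS])

end Construction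

/-- Fix an infinite `I ⊆ ℕ`.  Let `β₁, …, β_n` be `I`-supported elements of
`∏_{i ∈ ℕ} ℚ≥0`, linearly independent over `ℚ`, and `α ∈ ∏_{i ∈ ℕ} ℚ≥0` an `I`-supported
element with `α = η₁β₁ + ⋯ + η_{n-1}β_{n-1} - β_n`, each `η_i ∈ {0, 1}`.  Then there is a
finite set `Γ ⊆ ∏_{i ∈ ℕ} ℚ≥0` of `I`-supported elements, linearly independent over `ℚ`,
with `{α, β₁, …, β_n} ⊆ Σ_{γ ∈ Γ} ℚ≥0 · γ`. -/
theorem exists_independent_cone_containing_of_binary_relation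
    (I : Set ℕ) (hI : I.Infinite) (n : ℕ) (hn : 1 ≤ n)
    (β : ℕ → (ℕ → ℚ))
    (hβ : ∀ i ∈ Finset.Icc 1 n, NonnegSeq (β i) ∧ ISupported I (β i))
    (hind : LinearIndependent ℚ (fun i : (Finset.Icc 1 n : Finset ℕ) => β i))
    (η : ℕ → ℚ) (hη : ∀ i, η i = 0 ∨ η i = 1)
    (α : ℕ → ℚ) (hα : NonnegSeq α ∧ ISupported I α)
    (heq : α = (∑ i ∈ Finset.Icc 1 (n - 1), η i • β i) - β n) :
    ∃ Γ : Finset (ℕ → ℚ),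
      (∀ γ ∈ Γ, NonnegSeq γ ∧ ISupported I γ) ∧ FinsetLinIndep Γ ∧
        InConeSpan Γ α ∧ ∀ i ∈ Finset.Icc 1 n, InConeSpan Γ (β i) := by
  set U := Finset.Icc 1 (n - 1)
  set S := U.filter (η · = 1)
  have hIcc : Finset.Icc 1 n = insert n U := by
    ext i; simp only [U, Finset.mem_Icc, Finset.mem_insert]; omega
  have hnU : n ∉ U := by simp [U]; omega
  have hβU (i) (hi : i ∈ U) : NonnegISupported I (β i) := hβ i (hIcc ▸ Finset.mem_insert_of_mem hi)
  obtain ⟨hβU_indep, hβn⟩ := (linearIndepOn_insert (s := (U : Set ℕ)) (mod_cast hnU)).mp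
    (by rw [← Finset.coe_insert, ← hIcc]; exact hind)
  have hαS : α + β n = ∑ i ∈ S, β i := by
    rw [heq, Finset.sum_smul_eq_sum_filter_of_forall_eq_zero_or_eq_one (fun i _ => hη i)]
    abel
  have hα_span : α ∉ span ℚ (β '' U) := fun h => hβn <| by
    rw [eq_sub_of_add_eq' hαS]
    exact sub_mem (sum_mem fun i hi =>
      subset_span (Set.mem_image_of_mem β (Finset.filter_subset _ _ hi))) h
  obtain ⟨u, hu, huI⟩ := exists_proportional_split hα (hβ n (by simp [hn]))
    (fun l hl => hβU l (Finset.filter_subset _ _ hl)) hαS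
  obtain ⟨Γ, hΓI, hΓ, hαΓ, hβnΓ, hβΓ⟩ := exists_independent_cone_of_split hI
    (Finset.filter_subset _ U) hβU_indep hα_span hu (fun i hi => hβU i (Finset.sdiff_subset hi)) huI
  refine ⟨Γ, hΓI, hΓ, hαΓ, fun i hi => ?_⟩
  rw [hIcc, Finset.mem_insert] at hi
  rcases hi with rfl | hi
  · rwa [← hαS, add_sub_cancel_left] at hβnΓ
  · exact hβΓ i hi
end

section
/- Fix an infinite subset I ⊆ ℕ. Let β₁,…,β_n be I-supported elements of ∏_{i∈ℕ} ℚ≥0 that are linearly independent over ℚ, and let α ∈ ∏_{i∈ℕ} ℚ≥0 be any I-supported element. Then there exists a finite set Γ ⊆ ∏_{i∈ℕ} ℚ≥0 of I-supported elements that is linearly independent over ℚ and satisfies {α, β₁,…,β_n} ⊆ Σ_{γ∈Γ} ℚ≥0·γ. -/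
/-!
Adjoin `α` to the `β`'s. Since the `β`'s are independent, all linear relations among
`v = (α, β₁, …, βₙ)` are multiples of a single relation `μ`, which splits as
`∑_{μ a > 0} μ a • v a = ∑_{μ b < 0} (-μ b) • v b =: u`. The Riesz pieces
`w (a, b) = (μ a • v a) * (-μ b • v b) / u` are nonnegative, `I`-supported, and have row sums
`μ a • v a` and column sums `-μ b • v b`; so every `v a` lies in the cone spanned by the
`w (a, b)` and the `v c` with `μ c = 0`. To make this family independent, perturb the
`w (a, b)` at fresh coordinates of `I`, outside a finite set of coordinates that determines the
span of the family, by small multiples of signed rectangles. This keeps row and column sums and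
positivity, and the coefficients of a relation of the perturbed family must then have the form
`s a + r b`; such a relation comes from a multiple of `μ`, hence is trivial.
-/

open Finset Function Submodule

lemma exists_finset_eq_zero_of_apply_eq_zero {K X : Type*} [Field K]
    (W : Submodule K (X → K)) [FiniteDimensional K W] :
    ∃ R : Finset X, ∀ f ∈ W, (∀ t ∈ R, f t = 0) → f = 0 := by
  classical
  let A : Finset X → Submodule K (X → K) := fun R =>
    W ⊓ ⨅ t ∈ R, LinearMap.ker (LinearMap.proj t)
  have mem_A {R f} : f ∈ A R ↔ f ∈ W ∧ ∀ t ∈ R, f t = 0 := by simp [A]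
  have (R : Finset X) : FiniteDimensional K (A R) := finiteDimensional_of_le inf_le_left
  -- the vanishing subspace of least dimension must be trivial
  set R := argmin fun R => Module.finrank K (A R)
  refine ⟨R, fun f hfW hfR => funext fun t => by_contra fun ht => ?_⟩
  have hlt : A (insert t R) < A R := by
    refine lt_of_le_of_ne (fun g hg => ?_) fun h => ht ?_
    · exact mem_A.2 ⟨(mem_A.1 hg).1, fun s hs => (mem_A.1 hg).2 s (mem_insert_of_mem hs)⟩
    · exact (mem_A.1 (h ▸ mem_A.2 ⟨hfW, hfR⟩)).2 t (mem_insert_self t R)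
  exact (finrank_lt_finrank_of_lt hlt).not_ge (argmin_le (fun R => Module.finrank K (A R)) _)

lemma linearIndepOn_add_of_apply_eq_zero {K X J : Type*} [Field K] {G p : J → X → K}
    {S : Finset J} {R : Set X}
    (hR : ∀ f ∈ span K (G '' S), (∀ t ∈ R, f t = 0) → f = 0)
    (hpR : ∀ j ∈ S, ∀ t ∈ R, p j t = 0)
    (hker : ∀ c : J → K, ∑ j ∈ S, c j • p j = 0 → ∑ j ∈ S, c j • G j = 0 → ∀ j ∈ S, c j = 0) :
    LinearIndepOn K (G + p) S := by
  rw [linearIndepOn_finset_iff]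
  intro c hc
  have hGp : ∑ j ∈ S, c j • G j = -∑ j ∈ S, c j • p j := by
    simpa [smul_add, sum_add_distrib, eq_neg_iff_add_eq_zero] using hc
  have hG : ∑ j ∈ S, c j • G j = 0 := by
    refine hR _ (sum_mem fun j hj => smul_mem _ _ (subset_span (Set.mem_image_of_mem G hj)))
      fun t ht => ?_
    rw [hGp, Pi.neg_apply, Finset.sum_apply, neg_eq_zero]
    exact sum_eq_zero fun j hj => by simp [hpR j hj t ht]
  exact hker c (by simpa [hG] using hGp.symm) hG

lemma exists_forall_relation_eq_smul_of_linearIndependent_some {K M ι : Type*} [Field K]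
    [AddCommGroup M] [Module K M] [Fintype ι] {v : Option ι → M}
    (hv : LinearIndependent K (v ∘ some)) :
    ∃ μ : Option ι → K, ∑ o, μ o • v o = 0 ∧
      ∀ c : Option ι → K, ∑ o, c o • v o = 0 → ∃ T : K, c = T • μ := by
  have key (c : Option ι → K) (hc : ∑ o, c o • v o = 0) (h₀ : c none = 0) : c = 0 := by
    rw [Fintype.sum_option, h₀, zero_smul, zero_add] at hc
    funext o
    cases o with
    | none => exact h₀
    | some i => exact Fintype.linearIndependent_iff.1 hv (c ∘ some) hc i
  by_cases h : ∃ μ : Option ι → K, ∑ o, μ o • v o = 0 ∧ μ none ≠ 0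
  · obtain ⟨μ, hμ, hμ₀⟩ := h
    refine ⟨μ, hμ, fun c hc => ⟨c none / μ none, sub_eq_zero.1 (key _ ?_ ?_)⟩⟩
    · simp only [Pi.sub_apply, Pi.smul_apply, smul_eq_mul, sub_smul, sum_sub_distrib, hc,
        mul_smul, ← smul_sum, hμ, smul_zero, sub_zero]
    · simp [div_mul_cancel₀ _ hμ₀]
  · push Not at h
    exact ⟨0, by simp, fun c hc => ⟨0, by simpa using key c hc (h c hc)⟩⟩

lemma Set.Infinite.exists_injective_mem {α β : Type*} [Finite α] {s : Set β}
    (hs : s.Infinite) : ∃ f : α → β, Injective f ∧ ∀ a, f a ∈ s := by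
  have := Fintype.ofFinite α
  let e := (Fintype.equivFin α).toEmbedding.trans (Fin.valEmbedding.trans hs.natEmbedding)
  exact ⟨fun a => e a, Subtype.val_injective.comp e.injective, fun a => (e a).2⟩

lemma Finset.exists_pos_le_of_forall_pos {α 𝕜 : Type*} [Semiring 𝕜] [LinearOrder 𝕜]
    [IsStrictOrderedRing 𝕜] (s : Finset α) {f : α → 𝕜} (hf : ∀ a ∈ s, 0 < f a) :
    ∃ e > 0, ∀ a ∈ s, e ≤ f a := by
  rcases s.eq_empty_or_nonempty with rfl | hs
  · exact ⟨1, one_pos, by simp⟩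
  · obtain ⟨a, ha, hmin⟩ := s.exists_min_image f hs
    exact ⟨f a, hf a ha, hmin⟩

section SignedCorners

variable {ι κ R : Type*} [DecidableEq ι] [DecidableEq κ] [CommRing R]

lemma sum_mul_single_sub_single {s : Finset κ} {b b' : κ} (hb : b ∈ s) (hb' : b' ∈ s)
    (f : κ → R) : ∑ j ∈ s, f j * (Pi.single b 1 - Pi.single b' 1 : κ → R) j = f b - f b' := by
  simp [mul_sub, sum_sub_distrib, Pi.single_apply, hb, hb']

/-- The rectangle with opposite corners `q.1` and `q.2`, with signs `+` at these two corners and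
`-` at the other two. -/
def signedCorners (q : (ι × κ) × (ι × κ)) (k : ι × κ) : R :=
  (Pi.single q.1.1 1 - Pi.single q.2.1 1 : ι → R) k.1 *
    (Pi.single q.1.2 1 - Pi.single q.2.2 1 : κ → R) k.2

variable {P : Finset ι} {N : Finset κ} {q : (ι × κ) × (ι × κ)}

lemma sum_signedCorners_left (hq : q ∈ (P ×ˢ N) ×ˢ (P ×ˢ N)) (a : ι) :
    ∑ b ∈ N, signedCorners q (a, b) = (0 : R) := by
  simp only [mem_product] at hq
  simp [signedCorners, ← mul_sum, sum_sub_distrib, hq.1.2, hq.2.2]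

lemma sum_signedCorners_right (hq : q ∈ (P ×ˢ N) ×ˢ (P ×ˢ N)) (b : κ) :
    ∑ a ∈ P, signedCorners q (a, b) = (0 : R) := by
  simp only [mem_product] at hq
  simp [signedCorners, ← sum_mul, sum_sub_distrib, hq.1.1, hq.2.1]

lemma sum_mul_signedCorners (hq : q ∈ (P ×ˢ N) ×ˢ (P ×ˢ N)) (c : ι × κ → R) :
    ∑ k ∈ P ×ˢ N, c k * signedCorners q k =
      c q.1 - c (q.1.1, q.2.2) - c (q.2.1, q.1.2) + c q.2 := by
  simp only [mem_product] at hq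
  have row (a : ι) : ∑ b ∈ N, c (a, b) * signedCorners q (a, b) =
      (c (a, q.1.2) - c (a, q.2.2)) * (Pi.single q.1.1 1 - Pi.single q.2.1 1 : ι → R) a := by
    simp only [signedCorners, mul_left_comm (c _)]
    rw [← mul_sum, sum_mul_single_sub_single hq.1.2 hq.2.2 fun b => c (a, b), mul_comm]
  rw [sum_product, sum_congr rfl fun a _ => row a,
    sum_mul_single_sub_single hq.1.1 hq.2.1 fun a => c (a, q.1.2) - c (a, q.2.2)]
  ring

lemma exists_eq_add_of_sum_mul_signedCorners_eq_zero {c : ι × κ → R}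
    (h : ∀ q ∈ (P ×ˢ N) ×ˢ (P ×ˢ N), ∑ k ∈ P ×ˢ N, c k * signedCorners q k = 0) :
    ∃ (s : ι → R) (r : κ → R), ∀ k ∈ P ×ˢ N, c k = s k.1 + r k.2 := by
  rcases (P ×ˢ N).eq_empty_or_nonempty with hK | ⟨k₀, hk₀⟩
  · exact ⟨0, 0, by simp [hK]⟩
  refine ⟨fun a => c (a, k₀.2) - c k₀, fun b => c (k₀.1, b), fun k hk => ?_⟩
  have := h (k, k₀) (mem_product.2 ⟨hk, hk₀⟩)
  rw [sum_mul_signedCorners (mem_product.2 ⟨hk, hk₀⟩)] at this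
  linear_combination this

variable {X : Type*} [DecidableEq X]

def cornerPerturbation (Q : Finset ((ι × κ) × (ι × κ))) (t : (ι × κ) × (ι × κ) → X)
    (ε : (ι × κ) × (ι × κ) → R) (k : ι × κ) : X → R :=
  ∑ q ∈ Q, (signedCorners q k : R) • (Pi.single (t q) (ε q) : X → R)

variable {Q : Finset ((ι × κ) × (ι × κ))} {t : (ι × κ) × (ι × κ) → X}
  {ε : (ι × κ) × (ι × κ) → R}

lemma cornerPerturbation_apply (ht : Set.InjOn t Q) (hq : q ∈ Q) (k : ι × κ) :
    cornerPerturbation Q t ε k (t q) = signedCorners q k * ε q := by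
  rw [cornerPerturbation, Finset.sum_apply, sum_eq_single_of_mem q hq]
  · simp
  · intro q' hq' hne
    have : t q ≠ t q' := fun h => hne (ht hq' hq h.symm)
    simp [this]

lemma cornerPerturbation_apply_of_forall_ne {s : X} (hs : ∀ q ∈ Q, t q ≠ s) (k : ι × κ) :
    cornerPerturbation Q t ε k s = 0 := by
  rw [cornerPerturbation, Finset.sum_apply]
  exact sum_eq_zero fun q hq => by simp [(hs q hq).symm]

lemma sum_cornerPerturbation_left (hQ : Q ⊆ (P ×ˢ N) ×ˢ (P ×ˢ N)) (a : ι) :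
    ∑ b ∈ N, cornerPerturbation Q t ε (a, b) = 0 := by
  simp only [cornerPerturbation]
  rw [sum_comm]
  exact sum_eq_zero fun q hq => by rw [← sum_smul, sum_signedCorners_left (hQ hq), zero_smul]

lemma sum_cornerPerturbation_right (hQ : Q ⊆ (P ×ˢ N) ×ˢ (P ×ˢ N)) (b : κ) :
    ∑ a ∈ P, cornerPerturbation Q t ε (a, b) = 0 := by
  simp only [cornerPerturbation]
  rw [sum_comm]
  exact sum_eq_zero fun q hq => by rw [← sum_smul, sum_signedCorners_right (hQ hq), zero_smul]

lemma sum_mul_signedCorners_eq_zero_of_sum_smul_cornerPerturbation [NoZeroDivisors R]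
    (ht : Set.InjOn t Q) (hε : ∀ q ∈ Q, ε q ≠ 0) {K : Finset (ι × κ)} {c : ι × κ → R}
    (h : ∑ k ∈ K, c k • cornerPerturbation Q t ε k = 0) :
    ∀ q ∈ Q, ∑ k ∈ K, c k * signedCorners q k = 0 := by
  intro q hq
  have := congrFun h (t q)
  simp only [Finset.sum_apply, Pi.smul_apply, smul_eq_mul, cornerPerturbation_apply ht hq,
    ← mul_assoc, ← sum_mul, Pi.zero_apply] at this
  exact (mul_eq_zero.1 this).resolve_right (hε q hq)

end SignedCorners

section OrderedSignedCorners

variable {ι κ X R : Type*} [DecidableEq ι] [DecidableEq κ] [DecidableEq X] [Field R]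
  [LinearOrder R] [IsStrictOrderedRing R]

lemma abs_signedCorners_le_one (q : (ι × κ) × (ι × κ)) (k : ι × κ) :
    |signedCorners q k| ≤ (1 : R) := by
  have h (x : R) (hx : x = 1 - 1 ∨ x = 1 - 0 ∨ x = 0 - 1 ∨ x = 0 - 0) : |x| ≤ 1 := by
    rcases hx with rfl | rfl | rfl | rfl <;> norm_num
  rw [signedCorners, abs_mul]
  refine mul_le_one₀ (h _ ?_) (abs_nonneg _) (h _ ?_) <;>
    simp only [Pi.sub_apply, Pi.single_apply] <;> split_ifs <;> simp

lemma abs_cornerPerturbation_le {Q : Finset ((ι × κ) × (ι × κ))}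
    {t : (ι × κ) × (ι × κ) → X} {ε : (ι × κ) × (ι × κ) → R} (ht : Set.InjOn t Q) {f : X → R}
    (hf : ∀ s, 0 ≤ f s) (hε : ∀ q ∈ Q, |ε q| ≤ f (t q)) (k : ι × κ) (s : X) :
    |cornerPerturbation Q t ε k s| ≤ f s := by
  by_cases hs : ∃ q ∈ Q, t q = s
  · obtain ⟨q, hq, rfl⟩ := hs
    rw [cornerPerturbation_apply ht hq, abs_mul]
    exact (mul_le_of_le_one_left (abs_nonneg _) (abs_signedCorners_le_one q k)).trans (hε q hq)
  · push Not at hs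
    simpa [cornerPerturbation_apply_of_forall_ne hs] using hf s

end OrderedSignedCorners

section Riesz

variable {ι κ X R : Type*} [Fintype ι] [Field R] [LinearOrder R]
  [IsStrictOrderedRing R]

def rieszPiece (x : ι → X → R) (y : κ → X → R) (k : ι × κ) : X → R :=
  fun s => x k.1 s * y k.2 s / ∑ a, x a s

variable {x : ι → X → R} {y : κ → X → R}

lemma sum_rieszPiece_left [Fintype κ] (hx : ∀ a s, 0 ≤ x a s) (hxy : ∑ a, x a = ∑ b, y b) (a : ι) :
    ∑ b, rieszPiece x y (a, b) = x a := by
  funext s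
  have hu : ∑ b, y b s = ∑ a, x a s := by simpa [Finset.sum_apply] using (congrFun hxy s).symm
  simp only [Finset.sum_apply, rieszPiece, ← sum_div, ← mul_sum, hu]
  exact mul_div_cancel_of_imp fun h =>
    le_antisymm (h ▸ single_le_sum (fun a _ => hx a s) (mem_univ a)) (hx a s)

lemma sum_rieszPiece_right [Fintype κ] (hy : ∀ b s, 0 ≤ y b s) (hxy : ∑ a, x a = ∑ b, y b) (b : κ) :
    ∑ a, rieszPiece x y (a, b) = y b := by
  funext s
  have hu : ∑ b, y b s = ∑ a, x a s := by simpa [Finset.sum_apply] using (congrFun hxy s).symm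
  simp only [Finset.sum_apply, rieszPiece, ← sum_div, ← sum_mul]
  exact mul_div_cancel_left_of_imp fun h =>
    le_antisymm ((single_le_sum (fun b _ => hy b s) (mem_univ b)).trans (hu.trans h).le) (hy b s)

lemma rieszPiece_nonneg (hx : ∀ a s, 0 ≤ x a s) (hy : ∀ b s, 0 ≤ y b s) (k : ι × κ) (s : X) :
    0 ≤ rieszPiece x y k s :=
  div_nonneg (mul_nonneg (hx _ s) (hy _ s)) (sum_nonneg fun a _ => hx a s)

lemma rieszPiece_pos (hx : ∀ a s, 0 ≤ x a s) {k : ι × κ} {s : X} (h₁ : 0 < x k.1 s)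
    (h₂ : 0 < y k.2 s) : 0 < rieszPiece x y k s :=
  div_pos (mul_pos h₁ h₂) (h₁.trans_le (single_le_sum (fun a _ => hx a s) (mem_univ _)))

end Riesz

lemma posPart_smul_apply_nonneg {ι : Type*} {v : ι → ℕ → ℚ} (hv : ∀ a, NonnegSeq (v a))
    (μ : ι → ℚ) (a : ι) (s : ℕ) : 0 ≤ (μ⁺ • v) a s :=
  mul_nonneg (posPart_nonneg _) (hv a s)

lemma negPart_smul_apply_nonneg {ι : Type*} {v : ι → ℕ → ℚ} (hv : ∀ a, NonnegSeq (v a))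
    (μ : ι → ℚ) (a : ι) (s : ℕ) : 0 ≤ (μ⁻ • v) a s :=
  mul_nonneg (negPart_nonneg _) (hv a s)

section SignSplit

variable {ι : Type*} [Fintype ι] {v : ι → ℕ → ℚ} {μ : ι → ℚ}

def posIndices (μ : ι → ℚ) : Finset ι := {a | 0 < μ a}

def negIndices (μ : ι → ℚ) : Finset ι := {a | μ a < 0}

def zeroIndices (μ : ι → ℚ) : Finset ι := {a | μ a = 0}

@[simp] lemma mem_posIndices {a : ι} : a ∈ posIndices μ ↔ 0 < μ a := by simp [posIndices]

@[simp] lemma mem_negIndices {a : ι} : a ∈ negIndices μ ↔ μ a < 0 := by simp [negIndices]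

@[simp] lemma mem_zeroIndices {a : ι} : a ∈ zeroIndices μ ↔ μ a = 0 := by simp [zeroIndices]

lemma sum_posPart_smul_eq_sum_negPart_smul (hμ : ∑ a, μ a • v a = 0) :
    ∑ a, (μ⁺ • v) a = ∑ a, (μ⁻ • v) a := by
  rw [← sub_eq_zero, ← sum_sub_distrib, ← hμ]
  simp [← sub_smul, posPart_sub_negPart]

lemma rieszPiece_posPart_negPart_eq_zero {k : ι × ι}
    (hk : k ∉ posIndices μ ×ˢ negIndices μ) : rieszPiece (μ⁺ • v) (μ⁻ • v) k = 0 := by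
  funext s
  simp only [mem_product, mem_posIndices, mem_negIndices, not_and_or, not_lt] at hk
  rcases hk with h | h
  · simp [rieszPiece, posPart_eq_zero.2 h]
  · simp [rieszPiece, negPart_eq_zero.2 h]

lemma sum_smul_rieszPiece_posPart_negPart (hv : ∀ a, NonnegSeq (v a)) (hμ : ∑ a, μ a • v a = 0)
    (s r : ι → ℚ) :
    ∑ k ∈ posIndices μ ×ˢ negIndices μ, (s k.1 + r k.2) • rieszPiece (μ⁺ • v) (μ⁻ • v) k =
      ∑ a, (s a * (μ a)⁺ + r a * (μ a)⁻) • v a := by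
  have hxy := sum_posPart_smul_eq_sum_negPart_smul hμ
  rw [sum_subset (subset_univ _) fun k _ hk => by
    rw [rieszPiece_posPart_negPart_eq_zero hk, smul_zero]]
  simp only [Fintype.sum_prod_type, add_smul, sum_add_distrib, ← smul_sum]
  rw [sum_comm (f := fun a b => r b • rieszPiece (μ⁺ • v) (μ⁻ • v) (a, b))]
  simp only [← smul_sum, sum_rieszPiece_left (posPart_smul_apply_nonneg hv μ) hxy,
    sum_rieszPiece_right (negPart_smul_apply_nonneg hv μ) hxy, Pi.smul_apply', mul_smul,
    Pi.posPart_apply, Pi.negPart_apply]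

lemma eq_zero_of_sum_smul_rieszPiece_add_sum_smul_eq_zero (hv : ∀ a, NonnegSeq (v a))
    (hμ : ∑ a, μ a • v a = 0) (huniq : ∀ c : ι → ℚ, ∑ a, c a • v a = 0 → ∃ T : ℚ, c = T • μ)
    {s r c : ι → ℚ}
    (h : ∑ k ∈ posIndices μ ×ˢ negIndices μ, (s k.1 + r k.2) • rieszPiece (μ⁺ • v) (μ⁻ • v) k +
      ∑ a ∈ zeroIndices μ, c a • v a = 0) :
    (∀ k ∈ posIndices μ ×ˢ negIndices μ, s k.1 + r k.2 = 0) ∧ ∀ a ∈ zeroIndices μ, c a = 0 := by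
  have hZ : ∑ a ∈ zeroIndices μ, c a • v a = ∑ a, (if μ a = 0 then c a else 0) • v a := by
    rw [zeroIndices, sum_filter]
    simp [ite_smul]
  rw [sum_smul_rieszPiece_posPart_negPart hv hμ, hZ, ← sum_add_distrib] at h
  obtain ⟨T, hT⟩ :=
    huniq (fun a => s a * (μ a)⁺ + r a * (μ a)⁻ + if μ a = 0 then c a else 0) (by
      simpa only [add_smul] using h)
  have hs (a : ι) (ha : 0 < μ a) : s a = T := by
    simpa [posPart_eq_self.2 ha.le, negPart_eq_zero.2 ha.le, ha.ne'] using congrFun hT a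
  have hr (b : ι) (hb : μ b < 0) : r b = -T := by
    have := congrFun hT b
    simp [posPart_eq_zero.2 hb.le, negPart_eq_neg.2 hb.le, hb.ne] at this
    exact mul_right_cancel₀ hb.ne (by linarith)
  refine ⟨fun k hk => ?_, fun a ha => ?_⟩
  · simp only [mem_product, mem_posIndices, mem_negIndices] at hk
    rw [hs _ hk.1, hr _ hk.2, add_neg_cancel]
  · simpa [mem_zeroIndices.1 ha] using congrFun hT a

lemma rieszPiece_posPart_negPart_pos {I : Set ℕ}
    (hv : ∀ a, NonnegSeq (v a) ∧ ISupported I (v a)) {k : ι × ι}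
    (hk : k ∈ posIndices μ ×ˢ negIndices μ) {s : ℕ} (hs : s ∈ I) :
    0 < rieszPiece (μ⁺ • v) (μ⁻ • v) k s := by
  have hvI (a : ι) : 0 < v a s := ((hv a).1 s).lt_of_ne' ((hv a).2 s hs)
  simp only [mem_product, mem_posIndices, mem_negIndices] at hk
  exact rieszPiece_pos (posPart_smul_apply_nonneg (fun a => (hv a).1) μ)
    (mul_pos (posPart_pos hk.1) (hvI _)) (mul_pos (negPart_pos hk.2) (hvI _))

variable [DecidableEq ι] {t : (ι × ι) × (ι × ι) → ℕ} {ε : (ι × ι) × (ι × ι) → ℚ}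

def perturbedRiesz (μ : ι → ℚ) (v : ι → ℕ → ℚ) (t : (ι × ι) × (ι × ι) → ℕ)
    (ε : (ι × ι) × (ι × ι) → ℚ) : ι × ι → ℕ → ℚ :=
  rieszPiece (μ⁺ • v) (μ⁻ • v) +
    cornerPerturbation ((posIndices μ ×ˢ negIndices μ) ×ˢ (posIndices μ ×ˢ negIndices μ)) t ε

lemma sum_perturbedRiesz_left (hv : ∀ a, NonnegSeq (v a)) (hμ : ∑ a, μ a • v a = 0) (a : ι) :
    ∑ b ∈ negIndices μ, perturbedRiesz μ v t ε (a, b) = (μ a)⁺ • v a := by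
  simp only [perturbedRiesz, Pi.add_apply, sum_add_distrib,
    sum_cornerPerturbation_left subset_rfl, add_zero]
  rw [sum_subset (subset_univ _) fun b _ hb => rieszPiece_posPart_negPart_eq_zero
    fun h => hb (mem_product.1 h).2]
  exact sum_rieszPiece_left (posPart_smul_apply_nonneg hv μ)
    (sum_posPart_smul_eq_sum_negPart_smul hμ) a

lemma sum_perturbedRiesz_right (hv : ∀ a, NonnegSeq (v a)) (hμ : ∑ a, μ a • v a = 0) (b : ι) :
    ∑ a ∈ posIndices μ, perturbedRiesz μ v t ε (a, b) = (μ b)⁻ • v b := by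
  simp only [perturbedRiesz, Pi.add_apply, sum_add_distrib,
    sum_cornerPerturbation_right subset_rfl, add_zero]
  rw [sum_subset (subset_univ _) fun a _ ha => rieszPiece_posPart_negPart_eq_zero
    fun h => ha (mem_product.1 h).1]
  exact sum_rieszPiece_right (negPart_smul_apply_nonneg hv μ)
    (sum_posPart_smul_eq_sum_negPart_smul hμ) b

lemma mem_hull_perturbedRiesz (hv : ∀ a, NonnegSeq (v a)) (hμ : ∑ a, μ a • v a = 0) (a : ι) :
    v a ∈ PointedCone.hull ℚ (Sum.elim (perturbedRiesz μ v t ε) v ''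
      (posIndices μ ×ˢ negIndices μ).disjSum (zeroIndices μ)) := by
  have hmem (j) (hj : j ∈ (posIndices μ ×ˢ negIndices μ).disjSum (zeroIndices μ)) :=
    subset_span (R := {c : ℚ // 0 ≤ c})
      (Set.mem_image_of_mem (Sum.elim (perturbedRiesz μ v t ε) v) hj)
  rcases lt_trichotomy (μ a) 0 with ha | ha | ha
  · rw [← inv_smul_smul₀ (neg_ne_zero.2 ha.ne) (v a), ← negPart_eq_neg.2 ha.le,
      ← sum_perturbedRiesz_right hv hμ]
    refine PointedCone.smul_mem _ (inv_nonneg.2 (negPart_nonneg _)) (sum_mem fun a' ha' => ?_)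
    exact hmem (.inl (a', a)) (inl_mem_disjSum.2 (mem_product.2 ⟨ha', mem_negIndices.2 ha⟩))
  · exact hmem (.inr a) (inr_mem_disjSum.2 (mem_zeroIndices.2 ha))
  · rw [← inv_smul_smul₀ ha.ne' (v a), ← posPart_eq_self.2 ha.le, ← sum_perturbedRiesz_left hv hμ]
    refine PointedCone.smul_mem _ (inv_nonneg.2 (posPart_nonneg _)) (sum_mem fun b hb => ?_)
    exact hmem (.inl (a, b)) (inl_mem_disjSum.2 (mem_product.2 ⟨mem_posIndices.2 ha, hb⟩))

lemma perturbedRiesz_nonneg_iSupported {I : Set ℕ}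
    (hv : ∀ a, NonnegSeq (v a) ∧ ISupported I (v a)) (ht : Injective t)
    (hε : ∀ q, ∀ k ∈ posIndices μ ×ˢ negIndices μ,
      |ε q| ≤ rieszPiece (μ⁺ • v) (μ⁻ • v) k (t q) / 2)
    {k : ι × ι} (hk : k ∈ posIndices μ ×ˢ negIndices μ) :
    NonnegSeq (perturbedRiesz μ v t ε k) ∧ ISupported I (perturbedRiesz μ v t ε k) := by
  have hv₀ (a : ι) : NonnegSeq (v a) := (hv a).1
  have hw (s : ℕ) : 0 ≤ rieszPiece (μ⁺ • v) (μ⁻ • v) k s :=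
    rieszPiece_nonneg (posPart_smul_apply_nonneg hv₀ μ) (negPart_smul_apply_nonneg hv₀ μ) k s
  have hhalf (s : ℕ) : rieszPiece (μ⁺ • v) (μ⁻ • v) k s / 2 ≤ perturbedRiesz μ v t ε k s := by
    have := abs_cornerPerturbation_le
      (Q := (posIndices μ ×ˢ negIndices μ) ×ˢ (posIndices μ ×ˢ negIndices μ)) ht.injOn
      (fun s => div_nonneg (hw s) zero_le_two) (fun q _ => hε q k hk) k s
    rw [perturbedRiesz, Pi.add_apply, Pi.add_apply]
    linarith [neg_abs_le (cornerPerturbation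
      ((posIndices μ ×ˢ negIndices μ) ×ˢ (posIndices μ ×ˢ negIndices μ)) t ε k s)]
  exact ⟨fun s => (div_nonneg (hw s) zero_le_two).trans (hhalf s),
    fun s hs => ((half_pos (rieszPiece_posPart_negPart_pos hv hk hs)).trans_le (hhalf s)).ne'⟩

lemma linearIndepOn_perturbedRiesz (hv : ∀ a, NonnegSeq (v a)) (hμ : ∑ a, μ a • v a = 0)
    (huniq : ∀ c : ι → ℚ, ∑ a, c a • v a = 0 → ∃ T : ℚ, c = T • μ) {R : Set ℕ}
    (hR : ∀ f ∈ span ℚ (Sum.elim (rieszPiece (μ⁺ • v) (μ⁻ • v)) v ''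
      (posIndices μ ×ˢ negIndices μ).disjSum (zeroIndices μ)), (∀ s ∈ R, f s = 0) → f = 0)
    (ht : Injective t) (htR : ∀ q, t q ∉ R) (hε : ∀ q, ε q ≠ 0) :
    LinearIndepOn ℚ (Sum.elim (perturbedRiesz μ v t ε) v)
      ((posIndices μ ×ˢ negIndices μ).disjSum (zeroIndices μ)) := by
  have hsplit : Sum.elim (perturbedRiesz μ v t ε) v = Sum.elim (rieszPiece (μ⁺ • v) (μ⁻ • v)) v +
      Sum.elim (cornerPerturbation ((posIndices μ ×ˢ negIndices μ) ×ˢ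
        (posIndices μ ×ˢ negIndices μ)) t ε) 0 := by
    rw [← Sum.elim_add_add, add_zero, perturbedRiesz]
  rw [hsplit]
  refine linearIndepOn_add_of_apply_eq_zero hR ?_ fun g hgp hgw => ?_
  · rintro (k | a) - s hs
    · exact cornerPerturbation_apply_of_forall_ne (fun q _ h => htR q (by rwa [h])) k
    · rfl
  simp only [sum_disjSum, Sum.elim_inl, Sum.elim_inr, Pi.zero_apply, smul_zero,
    sum_const_zero, add_zero] at hgp hgw
  obtain ⟨s, r, hsr⟩ := exists_eq_add_of_sum_mul_signedCorners_eq_zero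
    (sum_mul_signedCorners_eq_zero_of_sum_smul_cornerPerturbation ht.injOn (fun q _ => hε q) hgp)
  have := eq_zero_of_sum_smul_rieszPiece_add_sum_smul_eq_zero hv hμ huniq
    (s := s) (r := r) (c := fun a => g (.inr a))
    (by rw [← hgw]; congr 1; exact sum_congr rfl fun k hk => by rw [hsr k hk])
  rintro (k | a) hj <;> simp only [inl_mem_disjSum, inr_mem_disjSum] at hj
  · rw [hsr k hj]
    exact this.1 k hj
  · exact this.2 a hj

end SignSplit

lemma inConeSpan_of_mem_hull {Γ : Finset (ℕ → ℚ)} {v : ℕ → ℚ}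
    (h : v ∈ PointedCone.hull ℚ (Γ : Set (ℕ → ℚ))) : InConeSpan Γ v := by
  obtain ⟨f, -, rfl⟩ := mem_span_finset.mp h
  exact ⟨fun γ => f γ, fun γ => (f γ).2, rfl⟩

lemma exists_finset_of_linearIndepOn {J : Type*} {G : J → ℕ → ℚ} {S : Finset J}
    {p : (ℕ → ℚ) → Prop} (hG : LinearIndepOn ℚ G S) (hp : ∀ j ∈ S, p (G j)) :
    ∃ Γ : Finset (ℕ → ℚ), (∀ γ ∈ Γ, p γ) ∧ FinsetLinIndep Γ ∧
      ∀ v ∈ PointedCone.hull ℚ (G '' S), InConeSpan Γ v := by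
  classical
  refine ⟨S.image G, by simpa using hp, ?_, fun v hv => inConeSpan_of_mem_hull (by simpa using hv)⟩
  unfold FinsetLinIndep
  rw [coe_image]
  exact hG.id_image

theorem exists_independent_cone_of_forall_relation_eq_smul {ι : Type*} [Fintype ι]
    [DecidableEq ι] {I : Set ℕ} (hI : I.Infinite) {v : ι → ℕ → ℚ}
    (hv : ∀ a, NonnegSeq (v a) ∧ ISupported I (v a)) {μ : ι → ℚ} (hμ : ∑ a, μ a • v a = 0)
    (huniq : ∀ c : ι → ℚ, ∑ a, c a • v a = 0 → ∃ T : ℚ, c = T • μ) :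
    ∃ Γ : Finset (ℕ → ℚ), (∀ γ ∈ Γ, NonnegSeq γ ∧ ISupported I γ) ∧ FinsetLinIndep Γ ∧
      ∀ a, InConeSpan Γ (v a) := by
  have hv₀ (a : ι) : NonnegSeq (v a) := (hv a).1
  set K := posIndices μ ×ˢ negIndices μ
  set S := K.disjSum (zeroIndices μ)
  set w := rieszPiece (μ⁺ • v) (μ⁻ • v)
  have := FiniteDimensional.span_of_finite ℚ (S.finite_toSet.image (Sum.elim w v))
  obtain ⟨R, hR⟩ := exists_finset_eq_zero_of_apply_eq_zero (span ℚ (Sum.elim w v '' S))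
  obtain ⟨t, ht, htI⟩ := (hI.sdiff R.finite_toSet).exists_injective_mem (α := (ι × ι) × (ι × ι))
  choose ε hε₀ hε using fun q => K.exists_pos_le_of_forall_pos (f := fun k => w k (t q) / 2)
    fun k hk => half_pos (rieszPiece_posPart_negPart_pos hv hk (htI q).1)
  have hG := linearIndepOn_perturbedRiesz hv₀ hμ huniq hR ht (fun q => (htI q).2)
    fun q => (hε₀ q).ne'
  have hpos : ∀ j ∈ S, NonnegSeq (Sum.elim (perturbedRiesz μ v t ε) v j) ∧
      ISupported I (Sum.elim (perturbedRiesz μ v t ε) v j) := by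
    rintro (k | a) hj <;> simp only [S, inl_mem_disjSum, inr_mem_disjSum] at hj
    · exact perturbedRiesz_nonneg_iSupported hv ht
        (fun q k hk => (abs_of_pos (hε₀ q)).trans_le (hε q k hk)) hj
    · exact hv a
  obtain ⟨Γ, hΓ, hΓind, hcone⟩ := exists_finset_of_linearIndepOn
    (p := fun γ => NonnegSeq γ ∧ ISupported I γ) hG hpos
  exact ⟨Γ, hΓ, hΓind, fun a => hcone _ (mem_hull_perturbedRiesz hv₀ hμ a)⟩

/-- Fix an infinite `I ⊆ ℕ`.  Let `β₁, …, β_n` be `I`-supported elements of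
`∏_{i ∈ ℕ} ℚ≥0`, linearly independent over `ℚ`, and let `α ∈ ∏_{i ∈ ℕ} ℚ≥0` be any
`I`-supported element.  Then there is a finite set `Γ ⊆ ∏_{i ∈ ℕ} ℚ≥0` of `I`-supported
elements, linearly independent over `ℚ`, with `{α, β₁, …, β_n} ⊆ Σ_{γ ∈ Γ} ℚ≥0 · γ`. -/
theorem exists_independent_cone_containing
    (I : Set ℕ) (hI : I.Infinite) (n : ℕ)
    (β : ℕ → (ℕ → ℚ))
    (hβ : ∀ i ∈ Finset.Icc 1 n, NonnegSeq (β i) ∧ ISupported I (β i))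
    (hind : LinearIndependent ℚ (fun i : (Finset.Icc 1 n : Finset ℕ) => β i))
    (α : ℕ → ℚ) (hα : NonnegSeq α ∧ ISupported I α) :
    ∃ Γ : Finset (ℕ → ℚ),
      (∀ γ ∈ Γ, NonnegSeq γ ∧ ISupported I γ) ∧ FinsetLinIndep Γ ∧
        InConeSpan Γ α ∧ ∀ i ∈ Finset.Icc 1 n, InConeSpan Γ (β i) := by
  let v : Option (Finset.Icc 1 n) → ℕ → ℚ := fun o => o.elim α fun i => β i
  obtain ⟨μ, hμ, huniq⟩ := exists_forall_relation_eq_smul_of_linearIndependent_some (v := v) hind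
  have hv : ∀ o, NonnegSeq (v o) ∧ ISupported I (v o) := by
    rintro (_ | ⟨i, hi⟩)
    exacts [hα, hβ i hi]
  obtain ⟨Γ, hΓ, hΓind, hcone⟩ := exists_independent_cone_of_forall_relation_eq_smul hI hv hμ huniq
  exact ⟨Γ, hΓ, hΓind, hcone none, fun i hi => hcone (some ⟨i, hi⟩)⟩
end

section
/- Fix an infinite subset I ⊆ ℕ. For every finite set β₁,…,β_n of I-supported elements of ∏_{i∈ℕ} ℚ≥0, there exists a finite set Γ ⊆ ∏_{i∈ℕ} ℚ≥0 of I-supported elements that is linearly independent over ℚ and satisfies {β₁,…,β_n} ⊆ Σ_{γ∈Γ} ℚ≥0·γ. -/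
/-!
Write `ρ i = (β₁ i, …, βₙ i) ∈ ℚⁿ` and `Y = span {ρ i}`. The cone `Y ∩ ℚⁿ≥0` is finitely
generated: by induction on the size of the support, every nonnegative vector of `Y` is a
nonnegative combination of elementary ones (nonnegative vectors of `Y` of minimal support), and a
support carries only one elementary vector up to scaling. Expanding `ρ i = ∑ g, ν i g • g` over
these generators with `ν i ≥ 0`, and `ν i > 0` for `i ∈ I`, the sequences `γ_g = (ν i g)ᵢ`
contain every `βₖ` in their cone, with coefficients `g k`, and they are linearly independent as
soon as the `ν i` span. If they do not, pick `z` in the kernel of `a ↦ ∑ g, a g • g` outside their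
span; as `I` is infinite, some `ν i` with `i ∈ I` lies in the span of the others, and replacing it
by `ν i + ε • z` for a small `ε > 0` keeps every property and enlarges the span.
-/

open Function Submodule PointedCone

section NonnegativePart

variable {𝕜 ι : Type*} [Field 𝕜] [LinearOrder 𝕜]

lemma exists_nonneg_sub_smul_support_ssubset [IsStrictOrderedRing 𝕜] [Fintype ι] {x z : ι → 𝕜}
    (hx : 0 ≤ x) (hzx : support z ⊆ support x) (hz : ∃ j, 0 < z j) :
    ∃ t : 𝕜, 0 ≤ t ∧ 0 ≤ x - t • z ∧ support (x - t • z) ⊂ support x := by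
  classical
  obtain ⟨j₀, hj₀, hmin⟩ := Finset.exists_min_image ({j | 0 < z j} : Finset ι)
    (fun j => x j / z j) (by simpa [Finset.Nonempty] using hz)
  rw [Finset.mem_filter_univ] at hj₀
  have ht : 0 ≤ x j₀ / z j₀ := div_nonneg (hx j₀) hj₀.le
  refine ⟨x j₀ / z j₀, ht, fun j => ?_, ?_⟩
  · rcases lt_or_ge 0 (z j) with hzj | hzj
    · have := hmin j (Finset.mem_filter_univ _ |>.2 hzj)
      rw [div_le_div_iff₀ hj₀ hzj] at this
      simp only [Pi.zero_apply, Pi.sub_apply, Pi.smul_apply, smul_eq_mul, sub_nonneg]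
      rw [div_mul_eq_mul_div, div_le_iff₀ hj₀]
      linarith
    · simpa using (mul_nonpos_of_nonneg_of_nonpos ht hzj).trans (hx j)
  · refine LE.le.ssubset_of_mem_notMem ?_ (hzx hj₀.ne') ?_
    · exact (support_sub _ _).trans
        (Set.union_subset le_rfl ((support_smul_subset_right _ _).trans hzx))
    · simp [div_mul_cancel₀ _ hj₀.ne']

variable (Y : Submodule 𝕜 (ι → 𝕜))

def IsNonnegElementary (g : ι → 𝕜) : Prop :=
  g ∈ Y ∧ 0 ≤ g ∧ g ≠ 0 ∧ ∀ y ∈ Y, support y ⊆ support g → ∃ c : 𝕜, y = c • g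

variable {Y}

lemma IsNonnegElementary.smul [IsStrictOrderedRing 𝕜] {g : ι → 𝕜} (hg : IsNonnegElementary Y g)
    {c : 𝕜} (hc : 0 < c) : IsNonnegElementary Y (c • g) := by
  obtain ⟨hgY, hg₀, hg0, hmin⟩ := hg
  refine ⟨smul_mem Y c hgY, smul_nonneg hc.le hg₀, smul_ne_zero hc.ne' hg0, fun y hyY hy => ?_⟩
  rw [support_const_smul_of_ne_zero _ _ hc.ne'] at hy
  obtain ⟨d, rfl⟩ := hmin y hyY hy
  exact ⟨d / c, by rw [smul_smul, div_mul_cancel₀ _ hc.ne']⟩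

variable (Y) in
def nonnegElementaryNormalized [Fintype ι] : Set (ι → 𝕜) :=
  {g | IsNonnegElementary Y g ∧ ∑ j, g j = 1}

variable (Y) in
lemma finite_nonnegElementaryNormalized [Fintype ι] : (nonnegElementaryNormalized Y).Finite := by
  refine Set.Finite.of_finite_image (f := support) (Set.toFinite _) ?_
  rintro g ⟨hg, hg1⟩ g' ⟨hg', hg'1⟩ h
  obtain ⟨c, rfl⟩ := hg.2.2.2 g' hg'.1 (h ▸ le_rfl)
  simp only [Pi.smul_apply, smul_eq_mul, ← Finset.mul_sum, hg1, mul_one] at hg'1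
  rw [hg'1, one_smul]

variable [IsStrictOrderedRing 𝕜] [Fintype ι]

lemma exists_isNonnegElementary_support_subset {x : ι → 𝕜} (hxY : x ∈ Y) (hx : 0 ≤ x)
    (hx₀ : x ≠ 0) : ∃ g, IsNonnegElementary Y g ∧ support g ⊆ support x := by
  induction hn : (support x).ncard using Nat.strong_induction_on generalizing x with
  | _ n ih =>
  by_cases hxe : IsNonnegElementary Y x
  · exact ⟨x, hxe, le_rfl⟩
  obtain ⟨y, hyY, hyx, hy⟩ : ∃ y ∈ Y, support y ⊆ support x ∧ ∀ c : 𝕜, y ≠ c • x := by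
    simpa [IsNonnegElementary, hxY, hx, hx₀] using hxe
  have hy₀ : y ≠ 0 := by simpa using hy 0
  obtain ⟨y, hyY, hyx, hy, hpos⟩ : ∃ y ∈ Y, support y ⊆ support x ∧ (∀ c : 𝕜, y ≠ c • x) ∧
      ∃ j, 0 < y j := by
    by_cases h : ∃ j, 0 < y j
    · exact ⟨y, hyY, hyx, hy, h⟩
    simp only [not_exists, not_lt] at h
    obtain ⟨j, hj⟩ := Function.ne_iff.1 hy₀
    refine ⟨-y, neg_mem hyY, by rwa [support_neg], fun c hc => hy (-c) ?_, j,
      neg_pos.2 ((h j).lt_of_ne hj)⟩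
    rw [neg_smul, ← hc, neg_neg]
  obtain ⟨t, -, hx', hsupp⟩ := exists_nonneg_sub_smul_support_ssubset hx hyx hpos
  have hx'₀ : x - t • y ≠ 0 := by
    intro h
    rw [sub_eq_zero] at h
    have ht : t ≠ 0 := by rintro rfl; simp [h] at hx₀
    exact hy t⁻¹ (by rw [h, smul_smul, inv_mul_cancel₀ ht, one_smul])
  obtain ⟨g, hg, hgx⟩ := ih _ (hn ▸ Set.ncard_lt_ncard hsupp) (sub_mem hxY (smul_mem Y t hyY))
    hx' hx'₀ rfl
  exact ⟨g, hg, hgx.trans hsupp.subset⟩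

lemma IsNonnegElementary.sum_pos {g : ι → 𝕜} (hg : IsNonnegElementary Y g) : 0 < ∑ j, g j := by
  obtain ⟨j, hj⟩ := Function.ne_iff.1 hg.2.2.1
  exact Finset.sum_pos' (fun j _ => hg.2.1 j) ⟨j, Finset.mem_univ j, (hg.2.1 j).lt_of_ne' hj⟩

lemma IsNonnegElementary.mem_hull {g : ι → 𝕜} (hg : IsNonnegElementary Y g) :
    g ∈ hull 𝕜 (nonnegElementaryNormalized Y) := by
  have hs := hg.sum_pos
  have hnorm : (∑ j, g j)⁻¹ • g ∈ nonnegElementaryNormalized Y := by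
    refine ⟨hg.smul (inv_pos.2 hs), ?_⟩
    simp only [Pi.smul_apply, smul_eq_mul, ← Finset.mul_sum, inv_mul_cancel₀ hs.ne']
  have := smul_mem _ (⟨∑ j, g j, hs.le⟩ : {c : 𝕜 // 0 ≤ c}) (subset_hull hnorm)
  rwa [Nonneg.mk_smul, smul_smul, mul_inv_cancel₀ hs.ne', one_smul] at this

lemma mem_hull_nonnegElementaryNormalized {x : ι → 𝕜} (hxY : x ∈ Y) (hx : 0 ≤ x) :
    x ∈ hull 𝕜 (nonnegElementaryNormalized Y) := by
  induction hn : (support x).ncard using Nat.strong_induction_on generalizing x with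
  | _ n ih =>
  rcases eq_or_ne x 0 with rfl | hx₀
  · exact zero_mem _
  obtain ⟨g, hg, hgx⟩ := exists_isNonnegElementary_support_subset hxY hx hx₀
  obtain ⟨j, hj⟩ := Function.ne_iff.1 hg.2.2.1
  obtain ⟨t, ht, hx', hsupp⟩ :=
    exists_nonneg_sub_smul_support_ssubset hx hgx ⟨j, (hg.2.1 j).lt_of_ne' hj⟩
  have hrest := ih _ (hn ▸ Set.ncard_lt_ncard hsupp) (sub_mem hxY (smul_mem Y t hg.1)) hx' rfl
  simpa using add_mem hrest (smul_mem _ (⟨t, ht⟩ : {c : 𝕜 // 0 ≤ c}) hg.mem_hull)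

theorem Submodule.exists_finset_nonneg_generators (Y : Submodule 𝕜 (ι → 𝕜)) :
    ∃ G : Finset (ι → 𝕜), (∀ g ∈ G, g ∈ Y ∧ 0 ≤ g) ∧
      ∀ x ∈ Y, 0 ≤ x → ∃ a : G → 𝕜, 0 ≤ a ∧ ∑ g, a g • (g : ι → 𝕜) = x := by
  refine ⟨(finite_nonnegElementaryNormalized Y).toFinset, fun g hg => ?_, fun x hxY hx => ?_⟩
  · obtain ⟨⟨hgY, hg₀, -⟩, -⟩ := Set.Finite.mem_toFinset _ |>.1 hg
    exact ⟨hgY, hg₀⟩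
  · have hx' := mem_hull_nonnegElementaryNormalized hxY hx
    rw [← Set.Finite.coe_toFinset (finite_nonnegElementaryNormalized Y)] at hx'
    obtain ⟨f, hf⟩ := mem_span_finset'.1 hx'
    exact ⟨fun g => f g, fun g => (f g).2, by simpa only [Nonneg.coe_smul] using hf⟩

end NonnegativePart

section PositiveLift

lemma Set.Infinite.exists_mem_span_image_compl {α K V : Type*} [DivisionRing K] [AddCommGroup V]
    [Module K V] [FiniteDimensional K V] {I : Set α} (hI : I.Infinite) (ν : α → V) :
    ∃ i ∈ I, ν i ∈ span K (ν '' {i}ᶜ) := by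
  by_contra! h
  have : LinearIndepOn K ν I := linearIndepOn_iff_notMem_span.2 fun i hi hspan =>
    h i hi (span_mono (Set.image_mono fun j hj => hj.2) hspan)
  exact hI (Set.finite_coe_iff.1 (LinearIndependent.finite this))

variable {𝕜 α T N : Type*} [Field 𝕜] [LinearOrder 𝕜] [IsStrictOrderedRing 𝕜]

lemma exists_pos_forall_pos_add_mul [Fintype T] {v : T → 𝕜} (hv : ∀ t, 0 < v t) (z : T → 𝕜) :
    ∃ ε > 0, ∀ t, 0 < v t + ε * z t := by
  set S := ∑ t, |z t| / v t
  have hS : 0 ≤ S := Finset.sum_nonneg fun t _ => div_nonneg (abs_nonneg _) (hv t).le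
  refine ⟨(1 + S)⁻¹, by positivity, fun t => ?_⟩
  have hzt : |z t| / v t ≤ S :=
    Finset.single_le_sum (fun t _ => div_nonneg (abs_nonneg _) (hv t).le) (Finset.mem_univ t)
  rw [div_le_iff₀ (hv t)] at hzt
  have : (1 + S)⁻¹ * |z t| < v t := by
    rw [inv_mul_lt_iff₀ (by positivity)]
    nlinarith [hv t]
  nlinarith [neg_abs_le (z t), inv_pos.2 (show 0 < 1 + S by positivity)]

lemma exists_pos_preimage {ι : Type*} [Fintype ι] {Y : Submodule 𝕜 (ι → 𝕜)}
    {C : (T → 𝕜) →ₗ[𝕜] (ι → 𝕜)} (hCY : LinearMap.range C ≤ Y)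
    (hC : ∀ x ∈ Y, 0 ≤ x → ∃ a, 0 ≤ a ∧ C a = x) {x : ι → 𝕜} (hxY : x ∈ Y)
    (hx : ∀ k, 0 < x k) : ∃ a, (∀ t, 0 < a t) ∧ C a = x := by
  obtain ⟨ε, hε, hεx⟩ := exists_pos_forall_pos_add_mul hx (-C 1)
  obtain ⟨a, ha, hax⟩ := hC (x - ε • C 1) (sub_mem hxY (smul_mem _ _ (hCY ⟨1, rfl⟩)))
    fun k => by simpa [sub_eq_add_neg] using (hεx k).le
  refine ⟨a + ε • 1, fun t => ?_, by simp [hax]⟩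
  simpa using add_pos_of_nonneg_of_pos (ha t) hε

variable [AddCommGroup N] [Module 𝕜 N]

def IsPositiveLift (C : (T → 𝕜) →ₗ[𝕜] N) (ρ : α → N) (I : Set α) (ν : α → T → 𝕜) : Prop :=
  (∀ i, C (ν i) = ρ i) ∧ (∀ i, 0 ≤ ν i) ∧ ∀ i ∈ I, ∀ t, 0 < ν i t

variable [Fintype T] {C : (T → 𝕜) →ₗ[𝕜] N} {ρ : α → N} {I : Set α} {ν : α → T → 𝕜}

lemma IsPositiveLift.exists_span_lt (hν : IsPositiveLift C ρ I ν) (hI : I.Infinite)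
    (hC : LinearMap.range C ≤ span 𝕜 (Set.range ρ)) (htop : span 𝕜 (Set.range ν) ≠ ⊤) :
    ∃ ν', IsPositiveLift C ρ I ν' ∧ span 𝕜 (Set.range ν) < span 𝕜 (Set.range ν') := by
  classical
  obtain ⟨hCν, hν₀, hνI⟩ := hν
  have hρ : span 𝕜 (Set.range ρ) = (span 𝕜 (Set.range ν)).map C := by
    rw [map_span, ← Set.range_comp]
    exact congrArg _ (congrArg _ (funext hCν)).symm
  obtain ⟨z, hzC, hz⟩ : ∃ z ∈ LinearMap.ker C, z ∉ span 𝕜 (Set.range ν) := by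
    obtain ⟨x, -, hx⟩ := SetLike.exists_of_lt (lt_top_iff_ne_top.2 htop)
    obtain ⟨s, hs, hsx⟩ := (hρ ▸ hC (LinearMap.mem_range_self C x) : C x ∈ _)
    exact ⟨x - s, by simp [hsx], fun h => hx (by simpa using add_mem h hs)⟩
  obtain ⟨i, hiI, hi⟩ := hI.exists_mem_span_image_compl (K := 𝕜) ν
  obtain ⟨ε, hε, hεi⟩ := exists_pos_forall_pos_add_mul (hνI i hiI) z
  set ν' := update ν i (ν i + ε • z)
  have hcompl : ν '' {i}ᶜ = ν' '' {i}ᶜ := Set.image_congr fun j hj => (update_of_ne hj _ _).symm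
  have hle : span 𝕜 (Set.range ν) ≤ span 𝕜 (Set.range ν') := by
    refine span_le.2 (Set.range_subset_iff.2 fun j => ?_)
    rcases eq_or_ne j i with rfl | hj
    · exact span_mono (hcompl ▸ Set.image_subset_range _ _) hi
    · exact subset_span ⟨j, update_of_ne hj _ _⟩
  refine ⟨ν', ⟨fun j => ?_, fun j => ?_, fun j hjI t => ?_⟩, hle.lt_of_ne fun h => hz ?_⟩
  · rcases eq_or_ne j i with rfl | hj
    · simpa [ν', LinearMap.mem_ker.1 hzC] using hCν j
    · simpa [ν', hj] using hCν j
  · rcases eq_or_ne j i with rfl | hj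
    · simpa [ν', Pi.le_def] using fun t => (hεi t).le
    · simpa [ν', hj] using hν₀ j
  · rcases eq_or_ne j i with rfl | hj
    · simpa [ν'] using hεi t
    · simpa [ν', hj] using hνI j hjI t
  · have hεz : ε • z ∈ span 𝕜 (Set.range ν) := by
      have := sub_mem (h ▸ subset_span (Set.mem_range_self i) : ν' i ∈ span 𝕜 (Set.range ν))
        (subset_span (Set.mem_range_self i))
      simpa [ν'] using this
    simpa [hε.ne'] using smul_mem _ ε⁻¹ hεz

lemma IsPositiveLift.exists_span_eq_top (hν : IsPositiveLift C ρ I ν) (hI : I.Infinite)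
    (hC : LinearMap.range C ≤ span 𝕜 (Set.range ρ)) :
    ∃ ν', IsPositiveLift C ρ I ν' ∧ span 𝕜 (Set.range ν') = ⊤ := by
  induction h : span 𝕜 (Set.range ν) using WellFoundedGT.induction generalizing ν with
  | _ S ih =>
  by_cases htop : S = ⊤
  · exact ⟨ν, hν, h ▸ htop⟩
  obtain ⟨ν', hν', hlt⟩ := hν.exists_span_lt hI hC (h ▸ htop)
  exact ih _ (h ▸ hlt) hν' rfl

end PositiveLift

lemma linearIndependent_swap_of_span_range_eq_top {𝕜 α T : Type*} [CommRing 𝕜] [Fintype T]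
    {ν : α → T → 𝕜} (h : span 𝕜 (Set.range ν) = ⊤) : LinearIndependent 𝕜 (swap ν) := by
  classical
  refine Fintype.linearIndependent_iff.2 fun g hg t => ?_
  let φ : (T → 𝕜) →ₗ[𝕜] 𝕜 := ∑ s, g s • LinearMap.proj s
  have hφ : φ = 0 := LinearMap.ext_on_range h fun i => by
    simpa [φ, swap, mul_comm] using congrFun hg i
  simpa [φ, Pi.single_apply] using LinearMap.congr_fun hφ (Pi.single t 1)

lemma inConeSpan_image_univ {T : Type*} [Fintype T] [DecidableEq (ℕ → ℚ)] {γ : T → ℕ → ℚ}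
    (hγ : Injective γ) {a : T → ℚ} (ha : 0 ≤ a) :
    InConeSpan (Finset.univ.image γ) (∑ t, a t • γ t) := by
  refine ⟨extend γ a 0, fun v => ?_, ?_⟩
  · unfold extend
    split_ifs
    exacts [ha _, le_rfl]
  · rw [Finset.sum_image fun t _ s _ h => hγ h]
    simp [hγ.extend_apply]

theorem exists_nonneg_factorization_span_eq_top {𝕜 α ι : Type*} [Field 𝕜] [LinearOrder 𝕜]
    [IsStrictOrderedRing 𝕜] [Fintype ι] {I : Set α} (hI : I.Infinite) (ρ : α → ι → 𝕜)
    (hρ : ∀ i, 0 ≤ ρ i) (hρI : ∀ i ∈ I, ∀ k, 0 < ρ i k) :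
    ∃ (G : Finset (ι → 𝕜)) (ν : α → G → 𝕜), (∀ g ∈ G, 0 ≤ g) ∧
      (∀ i, ∑ g, ν i g • (g : ι → 𝕜) = ρ i) ∧ (∀ i, 0 ≤ ν i) ∧ (∀ i ∈ I, ∀ g, 0 < ν i g) ∧
      span 𝕜 (Set.range ν) = ⊤ := by
  set Y := span 𝕜 (Set.range ρ)
  obtain ⟨G, hGY, hG⟩ := Y.exists_finset_nonneg_generators
  set C := Fintype.linearCombination 𝕜 fun g : G => (g : ι → 𝕜)
  have hCY : LinearMap.range C ≤ Y := by
    rintro _ ⟨a, rfl⟩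
    rw [Fintype.linearCombination_apply]
    exact sum_mem fun g _ => smul_mem Y (a g) (hGY g g.2).1
  have hC : ∀ x ∈ Y, 0 ≤ x → ∃ a, 0 ≤ a ∧ C a = x := by
    simpa only [C, Fintype.linearCombination_apply] using hG
  have hlift : ∀ i, ∃ v, C v = ρ i ∧ 0 ≤ v ∧ (i ∈ I → ∀ g, 0 < v g) := fun i => by
    by_cases hi : i ∈ I
    · obtain ⟨a, ha, hax⟩ := exists_pos_preimage hCY hC (subset_span ⟨i, rfl⟩) (hρI i hi)
      exact ⟨a, hax, fun g => (ha g).le, fun _ => ha⟩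
    · obtain ⟨a, ha, hax⟩ := hC _ (subset_span ⟨i, rfl⟩) (hρ i)
      exact ⟨a, hax, ha, fun h => absurd h hi⟩
  choose ν hCν hν₀ hνI using hlift
  obtain ⟨ν', ⟨hCν', hν₀', hνI'⟩, htop⟩ :=
    IsPositiveLift.exists_span_eq_top ⟨hCν, hν₀, hνI⟩ hI hCY
  exact ⟨G, ν', fun g hg => (hGY g hg).2, fun i => by
    simpa only [C, Fintype.linearCombination_apply] using hCν' i, hν₀', hνI', htop⟩

/-- Fix an infinite `I ⊆ ℕ`.  For every finite family `β₁, …, β_n` of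
`I`-supported elements of `∏_{i ∈ ℕ} ℚ≥0` there is a finite set `Γ ⊆ ∏_{i ∈ ℕ} ℚ≥0` of
`I`-supported elements, linearly independent over `ℚ`, with
`{β₁, …, β_n} ⊆ Σ_{γ ∈ Γ} ℚ≥0 · γ`. -/
theorem exists_independent_cone_containing_finite_family
    (I : Set ℕ) (hI : I.Infinite) (n : ℕ)
    (β : ℕ → (ℕ → ℚ))
    (hβ : ∀ i ∈ Finset.Icc 1 n, NonnegSeq (β i) ∧ ISupported I (β i)) :
    ∃ Γ : Finset (ℕ → ℚ),
      (∀ γ ∈ Γ, NonnegSeq γ ∧ ISupported I γ) ∧ FinsetLinIndep Γ ∧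
        ∀ i ∈ Finset.Icc 1 n, InConeSpan Γ (β i) := by
  classical
  obtain ⟨G, ν, hG, hν, hν₀, hνI, hspan⟩ := exists_nonneg_factorization_span_eq_top hI
    (fun i (k : Finset.Icc 1 n) => β k i) (fun i k => (hβ k k.2).1 i)
    (fun i hi k => ((hβ k k.2).1 i).lt_of_ne' ((hβ k k.2).2 i hi))
  have hγ : LinearIndependent ℚ (swap ν) := linearIndependent_swap_of_span_range_eq_top hspan
  refine ⟨Finset.univ.image (swap ν), ?_, ?_, fun k hk => ?_⟩
  · simp only [Finset.mem_image, Finset.mem_univ, true_and, forall_exists_index,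
      forall_apply_eq_imp_iff]
    exact fun g => ⟨fun i => hν₀ i g, fun i hi => (hνI i hi g).ne'⟩
  · rw [FinsetLinIndep, Finset.coe_image, Finset.coe_univ, Set.image_univ]
    exact (linearIndepOn_id_range_iff hγ.injective).2 hγ
  · have hβk : β k = ∑ g : G, (g : Finset.Icc 1 n → ℚ) ⟨k, hk⟩ • swap ν g := funext fun i => by
      simpa [swap, mul_comm] using (congrFun (hν i) ⟨k, hk⟩).symm
    rw [hβk]
    exact inConeSpan_image_univ hγ.injective fun g => hG g g.2 _
end

section
/- Let k be a field, G an abelian group, D a submonoid of G, and H a submonoid of D that is full in D. Then k[H] is a direct summand of k[D] as a k[H]-module; that is, the inclusion of monoid algebras k[H] → k[D] admits a k[H]-linear retraction. -/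
/-!
The retraction is restriction of coefficients to `H`: `Σ a_d X^d ↦ Σ_{d ∈ H} a_d X^d`.
Fullness says that `h + d ∈ H` with `h ∈ H` forces `d ∈ H`, so multiplying by `X^h` sends
monomials outside `H` to monomials outside `H`; hence restriction commutes with multiplication
by elements of `k[H]`.
-/

open Function

namespace AddMonoidAlgebra

variable {k M N : Type*} [Semiring k]

theorem comapDomain_single_of_notMem_range {f : M → N} (hf : Injective f) {n : N}
    (hn : n ∉ Set.range f) (r : k) : comapDomain f hf (single n r) = 0 := by
  ext m
  simpa using Finsupp.single_eq_of_ne fun h => hn ⟨m, h⟩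

theorem comapDomain_mapDomain {f : M → N} (hf : Injective f) (x : AddMonoidAlgebra k M) :
    comapDomain f hf (mapDomain f x) = x := by
  induction x using induction_linear with
  | zero => simp
  | add x y hx hy => simp only [mapDomain_add, comapDomain_add, hx, hy]
  | single m r => rw [mapDomain_single, comapDomain_single_map]

variable [AddMonoid M] [AddMonoid N]

theorem comapDomain_mapDomainRingHom_mul {φ : M →+ N} (hφ : Injective φ)
    (hfull : ∀ m n, φ m + n ∈ Set.range φ → n ∈ Set.range φ)
    (r : AddMonoidAlgebra k M) (x : AddMonoidAlgebra k N) :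
    comapDomain φ hφ (mapDomainRingHom k φ r * x) = r * comapDomain φ hφ x := by
  induction r using induction_linear with
  | zero => simp
  | add r s hr hs => simp only [map_add, add_mul, comapDomain_add, hr, hs]
  | single m c =>
    induction x using induction_linear with
    | zero => simp
    | add x y hx hy => simp only [mul_add, comapDomain_add, hx, hy]
    | single n e =>
      rw [mapDomainRingHom_apply, mapDomain_single, single_mul_single]
      by_cases hn : n ∈ Set.range φ
      · obtain ⟨n, rfl⟩ := hn
        rw [← map_add, comapDomain_single_map, comapDomain_single_map, single_mul_single]
      · rw [comapDomain_single_of_notMem_range hφ (mt (hfull m n) hn),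
          comapDomain_single_of_notMem_range hφ hn, mul_zero]

end AddMonoidAlgebra

/-- Let `k` be a field, `G` an abelian group, `D` a submonoid of `G` and
`H` a submonoid of `D` that is full in `D` (whenever `x, y ∈ H` and `x - y ∈ D`, then
`x - y ∈ H`).  Then `k[H]` is a direct summand of `k[D]` as a `k[H]`-module: the inclusion
`k[H] → k[D]` of monoid algebras (induced by `H ⊆ D`) admits a `k[H]`-linear retraction. -/
theorem monoidAlgebra_direct_summand_of_full
    (k : Type) [Field k] {G : Type} [AddCommGroup G]
    (D H : AddSubmonoid G) (hHD : H ≤ D)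
    (hfull : ∀ x y : G, x ∈ H → y ∈ H → x - y ∈ D → x - y ∈ H) :
    ∃ π : AddMonoidAlgebra k D →+ AddMonoidAlgebra k H,
      (∀ (r : AddMonoidAlgebra k H) (a : AddMonoidAlgebra k D),
        π (AddMonoidAlgebra.mapDomainRingHom k (AddSubmonoid.inclusion hHD) r * a)
          = r * π a) ∧
      (∀ r : AddMonoidAlgebra k H,
        π (AddMonoidAlgebra.mapDomainRingHom k (AddSubmonoid.inclusion hHD) r) = r) := by
  have hι := AddSubmonoid.inclusion_injective hHD
  have hrange : ∀ (h : H) (d : D), AddSubmonoid.inclusion hHD h + d ∈ Set.range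
      (AddSubmonoid.inclusion hHD) → d ∈ Set.range (AddSubmonoid.inclusion hHD) := by
    rintro h d ⟨h', hh'⟩
    have hd : (d : G) = h' - h := by
      rw [← AddSubmonoid.coe_inclusion hHD h', hh']
      simp
    exact ⟨⟨d, hd ▸ hfull _ _ h'.2 h.2 (hd ▸ d.2)⟩, rfl⟩
  exact ⟨AddMonoidAlgebra.comapDomainAddMonoidHom _ hι,
    AddMonoidAlgebra.comapDomain_mapDomainRingHom_mul hι hrange,
    AddMonoidAlgebra.comapDomain_mapDomain hι⟩
end

section
/- Let k be a field, A = k[X₁,…,X_n] a polynomial ring, and I a monomial ideal of A with pd_A(A/I) = p (the projective dimension of A/I). Then for every integer i > p and every A-module M, the local cohomology module H^i_I(M) vanishes; in other words, the cohomological dimension of I is at most pd_A(A/I). -/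
universe u v

/-- `HasPdLE A n M` says the `A`-module `M` has projective dimension at most `n`,
defined by iterated syzygies: `pd M ≤ 0` iff `M` is projective, and `pd M ≤ n + 1` iff
`M` is a quotient of a projective module with kernel of projective dimension `≤ n`. -/
def HasPdLE (A : Type u) [CommRing A] : ℕ → ModuleCat.{v} A → Prop
  | 0, M => Module.Projective A M
  | n + 1, M => ∃ (P : ModuleCat.{v} A) (g : P →ₗ[A] M),
      Module.Projective A P ∧ Function.Surjective g ∧
        HasPdLE A n (ModuleCat.of A (LinearMap.ker g))

/-- `M` has projective dimension exactly `n`. -/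
def HasPdEq (A : Type u) [CommRing A] (n : ℕ) (M : ModuleCat.{v} A) : Prop :=
  HasPdLE A n M ∧ ∀ m : ℕ, m < n → ¬ HasPdLE A m M

/-- A (pure) monomial of a multivariate polynomial ring: a product of powers of the
variables. -/
def IsPureMvMonomial {k : Type*} [CommSemiring k] {σ : Type*} (p : MvPolynomial σ k) : Prop :=
  ∃ d : σ →₀ ℕ, p = MvPolynomial.monomial d 1

/-!
Let `I = (m₁, …, m_r)` with monomials `mⱼ`. The ring endomorphism `expand t` of `A` (`Xᵢ ↦ Xᵢᵗ`)
makes `A` a free module over itself, with basis the monomials whose exponents are all `< t`,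
and it carries `I` onto `I^[t] = (m₁ᵗ, …, m_rᵗ)`. Flat base change along `expand t` therefore
gives `pd (A ⧸ I^[t]) ≤ pd (A ⧸ I) = p`, so `Ext^i(A ⧸ I^[t], M) = 0` for `i > p`.
Since `I^[t] ≤ I^t` and `I ≤ √(I^[t])`, the ideals `I^[t]` are cofinal with the powers of `I`:
every transition map of the direct system `Ext^i(A ⧸ I^t, M)` eventually factors through some
`Ext^i(A ⧸ I^[t], M) = 0`, so the colimit `H^i_I(M)` vanishes.
-/

open CategoryTheory Limits Opposite

namespace CategoryTheory.ProjectiveResolution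

variable {C : Type*} [Category C] [Abelian C]

/-- `P.π.f 0`, typed with codomain `Z` instead of the defeq `((single₀ C).obj Z).X 0`. -/
noncomputable def augmentation {Z : C} (P : ProjectiveResolution Z) : P.complex.X 0 ⟶ Z :=
  (P.complex.toSingle₀Equiv Z P.π).1

instance {Z : C} (P : ProjectiveResolution Z) : Epi P.augmentation :=
  inferInstanceAs (Epi (P.π.f 0))

@[simp]
theorem d_comp_augmentation {Z : C} (P : ProjectiveResolution Z) :
    P.complex.d 1 0 ≫ P.augmentation = 0 :=
  (P.complex.toSingle₀Equiv Z P.π).2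

variable {S : ShortComplex C}

theorem d_comp_augmentation_comp_f (Q : ProjectiveResolution S.X₁) :
    Q.complex.d 1 0 ≫ Q.augmentation ≫ S.f = 0 := by
  rw [← Category.assoc, d_comp_augmentation, zero_comp]

theorem exact_augmentation_comp_f (hS : S.ShortExact) (Q : ProjectiveResolution S.X₁) :
    (ShortComplex.mk (Q.augmentation ≫ S.f) S.g (by simp)).Exact :=
  (ShortComplex.exact_iff_of_epi_of_isIso_of_mono
    (⟨Q.augmentation, 𝟙 _, 𝟙 _, by simp, by simp⟩ :
      ShortComplex.mk (Q.augmentation ≫ S.f) S.g (by simp) ⟶ S)).2 hS.exact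

theorem exact_d_augmentation_comp_f (hS : S.ShortExact) (Q : ProjectiveResolution S.X₁) :
    (ShortComplex.mk (Q.complex.d 1 0) (Q.augmentation ≫ S.f)
      (d_comp_augmentation_comp_f Q)).Exact :=
  have := hS.mono_f
  (ShortComplex.exact_iff_of_epi_of_isIso_of_mono
    (⟨𝟙 _, 𝟙 _, S.f, by simp, by simp⟩ : ShortComplex.mk _ _ Q.d_comp_augmentation ⟶
      ShortComplex.mk _ _ (d_comp_augmentation_comp_f Q))).1 Q.exact₀

noncomputable def ofShortExact (hS : S.ShortExact) [Projective S.X₂]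
    (Q : ProjectiveResolution S.X₁) : ProjectiveResolution S.X₃ where
  complex := Q.complex.augment (Q.augmentation ≫ S.f) (d_comp_augmentation_comp_f Q)
  projective
    | 0 => (inferInstance : Projective S.X₂)
    | n + 1 => (inferInstance : Projective (Q.complex.X n))
  π := (ChainComplex.toSingle₀Equiv _ _).symm
    ⟨S.g, (Category.assoc _ _ _).trans ((_ ≫= S.zero).trans comp_zero)⟩
  quasiIso := ⟨fun
    | 0 => by
      rw [ChainComplex.quasiIsoAt₀_iff, ShortComplex.quasiIso_iff_of_zeros' _ rfl rfl rfl]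
      refine (ShortComplex.exact_and_epi_g_iff_of_iso (S₂ := ShortComplex.mk _ S.g (by simp)) ?_).2
        ⟨exact_augmentation_comp_f hS Q, hS.epi_g⟩
      refine ShortComplex.isoMk (Iso.refl (Q.complex.X 0)) (Iso.refl S.X₂) (Iso.refl S.X₃) ?_ ?_
      · exact (Category.id_comp _).trans (Category.comp_id _).symm
      · exact (Category.id_comp _).trans ((Category.comp_id _).trans
          (ChainComplex.toSingle₀Equiv_symm_apply_f_zero (C := Q.complex.augment _ _) S.g _)).symm
    | 1 => by
      rw [quasiIsoAt_iff_exactAt' _ _ (ChainComplex.exactAt_succ_single_obj _ _),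
        HomologicalComplex.exactAt_iff' _ 2 1 0 (by simp) (by simp)]
      exact exact_d_augmentation_comp_f hS Q
    | n + 2 => by
      rw [quasiIsoAt_iff_exactAt' _ _ (ChainComplex.exactAt_succ_single_obj _ _),
        HomologicalComplex.exactAt_iff' _ (n + 3) (n + 2) (n + 1) (by simp) (by simp)]
      exact Q.exact_succ n⟩


theorem isZero_Ext_of_isZero_complex_X {R : Type*} [Ring R] [Linear R C] [EnoughProjectives C]
    {X : C} (P : ProjectiveResolution X) {n : ℕ} (h : IsZero (P.complex.X n)) (Y : C) :
    IsZero (((Ext R C n).obj (op X)).obj Y) := by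
  refine IsZero.of_iso ?_ (P.isoExt n Y)
  rw [← HomologicalComplex.exactAt_iff_isZero_homology, HomologicalComplex.exactAt_iff]
  refine ShortComplex.exact_of_isZero_X₂ _ ?_
  rw [IsZero.iff_id_eq_zero]
  ext (x : _ ⟶ _)
  obtain rfl : x = 0 := h.eq_of_src _ _
  rfl

end CategoryTheory.ProjectiveResolution

namespace HasPdLE

variable {A : Type u} [CommRing A]

theorem exists_projectiveResolution [Small.{v} A] {p : ℕ} {N : ModuleCat.{v} A}
    (h : HasPdLE A p N) : ∃ R : ProjectiveResolution N, ∀ j, p < j → IsZero (R.complex.X j) := by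
  induction p generalizing N with
  | zero =>
    have : Projective N := (IsProjective.iff_projective _).1 h
    exact ⟨ProjectiveResolution.self N, fun j hj =>
      HomologicalComplex.isZero_single_obj_X _ 0 N j (by omega)⟩
  | succ p ih =>
    obtain ⟨P, g, hP, hg, hK⟩ := h
    obtain ⟨Q, hQ⟩ := ih hK
    have : Projective P := (IsProjective.iff_projective _).1 hP
    refine ⟨.ofShortExact (LinearMap.shortExact_shortComplexKer hg) Q, ?_⟩
    rintro (_ | j) hj
    · omega
    · exact hQ j (by omega)

theorem isZero_Ext [Small.{v} A] {p : ℕ} {N : ModuleCat.{v} A} (h : HasPdLE A p N) {i : ℕ}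
    (hi : p < i) (Y : ModuleCat.{v} A) : IsZero (((Ext A (ModuleCat.{v} A) i).obj (op N)).obj Y) :=
  have ⟨R, hR⟩ := h.exists_projectiveResolution
  R.isZero_Ext_of_isZero_complex_X (hR i hi) Y

theorem of_linearEquiv {p : ℕ} {M N : ModuleCat.{v} A} (e : M ≃ₗ[A] N) (h : HasPdLE A p M) :
    HasPdLE A p N := by
  induction p generalizing M N with
  | zero =>
    have : Module.Projective A M := h
    exact Module.Projective.of_equiv e
  | succ p ih =>
    obtain ⟨P, g, hP, hg, hK⟩ := h
    refine ⟨P, e.toLinearMap ∘ₗ g, hP, e.surjective.comp hg, ?_⟩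
    rwa [LinearEquiv.ker_comp]

open TensorProduct

theorem baseChange {B : Type*} [CommRing B] [Algebra A B] [Module.Flat A B] {p : ℕ}
    {M : ModuleCat.{v} A} (h : HasPdLE A p M) : HasPdLE B p (ModuleCat.of B (B ⊗[A] M)) := by
  induction p generalizing M with
  | zero =>
    have : Module.Projective A M := h
    exact inferInstanceAs (Module.Projective B (B ⊗[A] M))
  | succ p ih =>
    obtain ⟨P, g, hP, hg, hK⟩ := h
    refine ⟨ModuleCat.of B (B ⊗[A] P), AlgebraTensorModule.lTensor B B g,
      inferInstanceAs (Module.Projective B (B ⊗[A] P)), LinearMap.lTensor_surjective B hg, ?_⟩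
    exact (ih hK).of_linearEquiv (LinearMap.tensorKerEquiv B B g)

theorem quotient_map_algebraMap {B : Type u} [CommRing B] [Algebra A B] [Module.Flat A B] {p : ℕ}
    {I : Ideal A} (h : HasPdLE A p (ModuleCat.of A (A ⧸ I))) :
    HasPdLE B p (ModuleCat.of B (B ⧸ I.map (algebraMap A B))) :=
  h.baseChange.of_linearEquiv
    (Algebra.TensorProduct.quotIdealMapEquivTensorQuot B I).symm.toLinearEquiv

end HasPdLE

namespace MvPolynomial

variable {σ R : Type*} [CommSemiring R] [DecidableEq σ] {t : ℕ}

theorem coeff_expand_mul_monomial (ht : t ≠ 0) {r s : σ →₀ ℕ} (hr : ∀ i, r i < t)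
    (hs : ∀ i, s i < t) (a : MvPolynomial σ R) (d : σ →₀ ℕ) :
    coeff (t • d + r) (expand t a * monomial s 1) = if s = r then coeff d a else 0 := by
  rw [coeff_mul_monomial', mul_one]
  split_ifs with hle hsr hsr
  · subst hsr
    rw [add_tsub_cancel_right, coeff_expand_smul _ ht]
  · obtain ⟨i, hi⟩ := Finsupp.ne_iff.1 hsr
    refine coeff_expand_of_not_dvd (i := i) _ fun hdvd => hi ?_
    have hle_i : s i ≤ t * d i + r i := by simpa using hle i
    have hmod := (Nat.modEq_iff_dvd' hle_i).2 (by simpa using hdvd)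
    rwa [Nat.ModEq, Nat.mul_add_mod, Nat.mod_eq_of_lt (hs i), Nat.mod_eq_of_lt (hr i)] at hmod
  · exact absurd (hsr ▸ le_add_self) hle
  · rfl

end MvPolynomial

open MvPolynomial

/-- `ExpandedMvPolynomial σ R t` is `MvPolynomial σ R` as an algebra over itself through
`expand t`; a type synonym, so that this algebra structure does not clash with `Algebra.id`. -/
def ExpandedMvPolynomial (σ R : Type*) [CommRing R] (_ : ℕ) : Type _ := MvPolynomial σ R

namespace ExpandedMvPolynomial

variable {σ R : Type*} [CommRing R] {t : ℕ}

noncomputable instance : CommRing (ExpandedMvPolynomial σ R t) :=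
  inferInstanceAs (CommRing (MvPolynomial σ R))

noncomputable instance : Algebra (MvPolynomial σ R) (ExpandedMvPolynomial σ R t) :=
  (expand t).toRingHom.toAlgebra

variable (σ R t) in
noncomputable def reducedMonomial (r : {r : σ →₀ ℕ // ∀ i, r i < t}) :
    ExpandedMvPolynomial σ R t :=
  (monomial r.1 1 : MvPolynomial σ R)

theorem linearIndependent_reducedMonomial (ht : t ≠ 0) :
    LinearIndependent (MvPolynomial σ R) (reducedMonomial σ R t) := by
  classical
  refine linearIndependent_iff'.2 fun s g hg r hr => MvPolynomial.ext _ _ fun d => ?_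
  replace hg : ∑ i ∈ s, expand t (g i) * monomial i.1 1 = (0 : MvPolynomial σ R) := hg
  have := congrArg (coeff (t • d + r.1)) hg
  rw [coeff_sum, Finset.sum_congr rfl fun i _ => coeff_expand_mul_monomial ht r.2 i.2 _ _] at this
  simpa [← Subtype.ext_iff, hr] using this

theorem span_reducedMonomial (ht : t ≠ 0) :
    Submodule.span (MvPolynomial σ R) (Set.range (reducedMonomial σ R t)) = ⊤ := by
  refine Submodule.eq_top_iff'.2 fun x => ?_
  change MvPolynomial σ R at x
  induction x using MvPolynomial.induction_on' with
  | monomial v c =>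
    let q : σ →₀ ℕ := v.mapRange (· / t) (Nat.zero_div t)
    let r : σ →₀ ℕ := v.mapRange (· % t) (Nat.zero_mod t)
    have hr : ∀ i, r i < t := fun i => Nat.mod_lt _ (Nat.pos_of_ne_zero ht)
    have hv : t • q + r = v := by
      ext i
      simp [q, r, Nat.div_add_mod]
    have : (monomial v c : ExpandedMvPolynomial σ R t) =
        monomial q c • reducedMonomial σ R t ⟨r, hr⟩ := by
      change monomial v c = expand t (monomial q c) * monomial r 1
      rw [expand_monomial, monomial_mul, mul_one, hv]
    rw [this]
    exact Submodule.smul_mem _ _ (Submodule.subset_span ⟨_, rfl⟩)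
  | add p q hp hq => exact Submodule.add_mem _ hp hq

theorem free (ht : t ≠ 0) : Module.Free (MvPolynomial σ R) (ExpandedMvPolynomial σ R t) :=
  .of_basis (.mk (linearIndependent_reducedMonomial ht) (span_reducedMonomial ht).ge)

end ExpandedMvPolynomial

theorem HasPdLE.quotient_map_expand {σ R : Type u} [CommRing R] {p t : ℕ} (ht : t ≠ 0)
    {I : Ideal (MvPolynomial σ R)}
    (h : HasPdLE (MvPolynomial σ R) p (ModuleCat.of (MvPolynomial σ R) (MvPolynomial σ R ⧸ I))) :
    HasPdLE (MvPolynomial σ R) p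
      (ModuleCat.of (MvPolynomial σ R) (MvPolynomial σ R ⧸ I.map (expand t))) :=
  have := ExpandedMvPolynomial.free (σ := σ) (R := R) ht
  h.quotient_map_algebraMap (B := ExpandedMvPolynomial σ R t)

namespace IsPureMvMonomial

variable {σ R : Type*} [CommSemiring R] {S : Set (MvPolynomial σ R)}

theorem expand_eq_pow {q : MvPolynomial σ R} (hq : IsPureMvMonomial q) (t : ℕ) :
    expand t q = q ^ t := by
  obtain ⟨d, rfl⟩ := hq
  rw [expand_monomial, monomial_pow, one_pow]

theorem map_expand_span_le_pow (hS : ∀ q ∈ S, IsPureMvMonomial q) (t : ℕ) :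
    (Ideal.span S).map (expand t) ≤ Ideal.span S ^ t := by
  rw [Ideal.map_span, Ideal.span_le]
  rintro _ ⟨q, hq, rfl⟩
  rw [(hS q hq).expand_eq_pow]
  exact Ideal.pow_mem_pow (Ideal.subset_span hq) t

theorem span_le_radical_map_expand (hS : ∀ q ∈ S, IsPureMvMonomial q) (t : ℕ) :
    Ideal.span S ≤ ((Ideal.span S).map (expand t)).radical := by
  rw [Ideal.span_le]
  intro q hq
  exact ⟨t, (hS q hq).expand_eq_pow t ▸ Ideal.mem_map_of_mem _ (Ideal.subset_span hq)⟩

end IsPureMvMonomial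

theorem CategoryTheory.Limits.isZero_colimit_of_forall_exists_map_eq_zero {J C : Type*}
    [Category J] [Category C] [HasZeroMorphisms C] (G : J ⥤ C) [HasColimit G]
    (h : ∀ j, ∃ (j' : J) (f : j ⟶ j'), G.map f = 0) : IsZero (colimit G) := by
  rw [IsZero.iff_id_eq_zero]
  refine colimit.hom_ext fun j => ?_
  obtain ⟨j', f, hf⟩ := h j
  rw [Category.comp_id, comp_zero, ← colimit.w G f, hf, zero_comp]

open localCohomology in
theorem isZero_localCohomology_obj_of_cofinal {R : Type u} [CommRing R] (I : Ideal R) (i : ℕ)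
    (M : ModuleCat.{u} R) (hI : I.FG)
    (h : ∀ t, ∃ J : Ideal R, J ≤ I ^ t ∧ I ≤ J.radical ∧
      IsZero (((Ext R (ModuleCat.{u} R) i).obj (op (ModuleCat.of R (R ⧸ J)))).obj M)) :
    IsZero ((localCohomology I i).obj M) := by
  have := hasColimitDiagram (idealPowersDiagram I) i
  refine IsZero.of_iso (isZero_colimit_of_forall_exists_map_eq_zero _ fun ⟨⟨t⟩⟩ => ?_)
    (colimitObjIsoColimitCompEvaluation _ M)
  obtain ⟨J, hJt, hIJ, hJ⟩ := h t
  obtain ⟨s, hsJ⟩ := Ideal.exists_pow_le_of_le_radical_of_fg hIJ hI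
  refine ⟨op (op (max s t)), (homOfLE (le_max_right s t)).op.op, ?_⟩
  have hfactor : (ringModIdeals (idealPowersDiagram I)).map (homOfLE (le_max_right s t)).op =
      ModuleCat.ofHom (Submodule.factor ((Ideal.pow_le_pow_right (le_max_left s t)).trans hsJ)) ≫
        ModuleCat.ofHom (Submodule.factor hJt) :=
    ModuleCat.hom_ext (Submodule.linearMap_qext _ rfl)
  have map_comp_eq_zero {X Y Z : ModuleCat.{u} R} (a : X ⟶ Y) (b : Y ⟶ Z)
      (hY : IsZero (((Ext R (ModuleCat.{u} R) i).obj (op Y)).obj M)) :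
      ((Ext R (ModuleCat.{u} R) i).map (a ≫ b).op).app M = 0 := by
    rw [op_comp, Functor.map_comp, NatTrans.comp_app, hY.eq_of_tgt (NatTrans.app _ M) 0, zero_comp]
  change ((Ext R (ModuleCat.{u} R) i).map (Quiver.Hom.op _)).app M = 0
  rw [Quiver.Hom.unop_op, hfactor]
  exact map_comp_eq_zero _ _ hJ

/-- Let `k` be a field, `A = k[X₁, …, X_n]`, and `I` a monomial ideal of `A`
with `pd_A(A/I) = p`.  Then for every `i > p` and every `A`-module `M` the local cohomology
module `H^i_I(M) = lim→_t Ext^i_A(A/Iᵗ, M)` vanishes; i.e. the cohomological dimension of `I`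
is at most `pd_A(A/I)`. -/
theorem localCohomology_subsingleton_of_pd_lt (k : Type) [Field k] {n : ℕ}
    (I : Ideal (MvPolynomial (Fin n) k))
    (hmonomial : ∃ S : Set (MvPolynomial (Fin n) k),
      (∀ q ∈ S, IsPureMvMonomial q) ∧ I = Ideal.span S)
    (p : ℕ)
    (hpd : HasPdEq (MvPolynomial (Fin n) k) p
      (ModuleCat.of (MvPolynomial (Fin n) k) (MvPolynomial (Fin n) k ⧸ I)))
    (i : ℕ) (hi : p < i) (M : ModuleCat (MvPolynomial (Fin n) k)) :
    Subsingleton ((localCohomology I i).obj M) := by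
  obtain ⟨S, hS, rfl⟩ := hmonomial
  refine ModuleCat.subsingleton_of_isZero <|
    isZero_localCohomology_obj_of_cofinal _ i M (IsNoetherian.noetherian _) fun t => ?_
  refine ⟨_, (IsPureMvMonomial.map_expand_span_le_pow hS (t + 1)).trans
    (Ideal.pow_le_pow_right t.le_succ), IsPureMvMonomial.span_le_radical_map_expand hS (t + 1), ?_⟩
  exact (hpd.1.quotient_map_expand t.succ_ne_zero).isZero_Ext hi M
end

section
/- Let C be a normal submonoid of ℤⁿ. Then there exist a nonnegative integer k and a positive normal submonoid C′ of ℤⁿ such that C is isomorphic, as an additive monoid, to the direct sum ℤ^k ⊕ C′. -/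
/-- A submonoid `C` of an abelian group is *normal* if whenever `a, b ∈ C` and some positive
integer multiple of `a - b` lies in `C`, then `a - b ∈ C`. -/
def IsNormalAddSubmonoid {G : Type*} [AddCommGroup G] (H : AddSubmonoid G) : Prop :=
  ∀ a b : G, a ∈ H → b ∈ H → (∃ m : ℕ, 0 < m ∧ m • (a - b) ∈ H) → a - b ∈ H

/-- A submonoid is *positive* if it contains no nonzero invertible element. -/
def IsPositiveAddSubmonoid {G : Type*} [AddCommGroup G] (H : AddSubmonoid G) : Prop :=
  ∀ a : G, a ∈ H → -a ∈ H → a = 0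

/-!
The units of `C` form a subgroup `U`, and normality of `C` says exactly that `U` is pure in the
group `G` generated by `C`: writing `x ∈ G` as `a - b` with `a, b ∈ C`, if `m • x ∈ U` then
`±x ∈ C`. Hence `G ⧸ U` is finitely generated and torsion-free, so free, and `U` has a complement
`V` in `G`. Every `c ∈ C` splits as `u + v` with `v = c - u ∈ C ∩ V`, so `C ≅ U × (C ∩ V)`; the
monoid `C ∩ V` is normal, and positive because its units lie in `U ∩ V = 0`. Finally `U ≅ ℤ^k`.
-/

namespace AddSubmonoid

variable {M : Type*} [AddCommGroup M]

/-- The group of units of `C`, named after its analogue `PointedCone.lineal` for cones. -/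
def lineal (C : AddSubmonoid M) : Submodule ℤ M :=
  AddSubgroup.toIntSubmodule
    { carrier := {x | x ∈ C ∧ -x ∈ C}
      zero_mem' := by simp [C.zero_mem]
      add_mem' := fun ⟨ha, ha'⟩ ⟨hb, hb'⟩ =>
        ⟨C.add_mem ha hb, by simpa [neg_add_rev] using C.add_mem hb' ha'⟩
      neg_mem' := fun ⟨h, h'⟩ => ⟨h', by simpa using h⟩ }

theorem exists_sub_eq_of_mem_closure {C : AddSubmonoid M} {x : M}
    (hx : x ∈ AddSubgroup.closure (C : Set M)) : ∃ a ∈ C, ∃ b ∈ C, a - b = x := by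
  induction hx using AddSubgroup.closure_induction with
  | mem x hx => exact ⟨x, hx, 0, C.zero_mem, sub_zero x⟩
  | zero => exact ⟨0, C.zero_mem, 0, C.zero_mem, sub_zero 0⟩
  | add _ _ _ _ hx hy =>
    obtain ⟨a, ha, b, hb, rfl⟩ := hx
    obtain ⟨a', ha', b', hb', rfl⟩ := hy
    exact ⟨a + a', C.add_mem ha ha', b + b', C.add_mem hb hb', by abel⟩
  | neg _ _ hx =>
    obtain ⟨a, ha, b, hb, rfl⟩ := hx
    exact ⟨b, hb, a, ha, (neg_sub a b).symm⟩

end AddSubmonoid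

namespace IsNormalAddSubmonoid

variable {M : Type*} [AddCommGroup M] {C : AddSubmonoid M}

theorem mem_lineal_of_nsmul_mem (hC : IsNormalAddSubmonoid C) {x : M}
    (hx : x ∈ AddSubgroup.closure (C : Set M)) {m : ℕ} (hm : 0 < m)
    (hmx : m • x ∈ C.lineal) : x ∈ C.lineal := by
  obtain ⟨a, ha, b, hb, rfl⟩ := AddSubmonoid.exists_sub_eq_of_mem_closure hx
  refine ⟨hC a b ha hb ⟨m, hm, hmx.1⟩, ?_⟩
  rw [neg_sub]
  exact hC b a hb ha ⟨m, hm, by simpa [← smul_neg] using hmx.2⟩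

theorem inf (hC : IsNormalAddSubmonoid C) (V : Submodule ℤ M) :
    IsNormalAddSubmonoid (C ⊓ V.toAddSubmonoid) := by
  rintro a b ⟨ha, haV⟩ ⟨hb, hbV⟩ ⟨m, hm, hmab⟩
  exact ⟨hC a b ha hb ⟨m, hm, hmab.1⟩, V.sub_mem haV hbV⟩

end IsNormalAddSubmonoid

namespace Submodule

variable {M : Type*} [AddCommGroup M]

theorem isAddTorsionFree_quotient_comap_subtype {U G : Submodule ℤ M}
    (hU : ∀ x ∈ G, ∀ m : ℕ, 0 < m → m • x ∈ U → x ∈ U) :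
    IsAddTorsionFree (G ⧸ U.comap G.subtype) := by
  refine IsAddTorsionFree.of_not_isOfFinAddOrder fun y hy hfin => hy ?_
  obtain ⟨m, hm, hmy⟩ := isOfFinAddOrder_iff_nsmul_eq_zero.mp hfin
  induction y using Submodule.Quotient.induction_on with | _ x => ?_
  rw [← Submodule.Quotient.mk_smul, Submodule.Quotient.mk_eq_zero] at hmy
  rw [Submodule.Quotient.mk_eq_zero]
  exact hU x x.2 m hm hmy

theorem exists_disjoint_le_sup_of_nsmul_mem {U G : Submodule ℤ M} (hG : G.FG)
    (hU : ∀ x ∈ G, ∀ m : ℕ, 0 < m → m • x ∈ U → x ∈ U) :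
    ∃ V : Submodule ℤ M, Disjoint U V ∧ G ≤ U ⊔ V := by
  set U' := U.comap G.subtype
  have : Module.Finite ℤ G := Module.Finite.iff_fg.mpr hG
  have := isAddTorsionFree_quotient_comap_subtype hU
  obtain ⟨s, hs⟩ := Module.projective_lifting_property U'.mkQ LinearMap.id U'.mkQ_surjective
  have hmkQ_s (y : G ⧸ U') : U'.mkQ (s y) = y := LinearMap.congr_fun hs y
  refine ⟨LinearMap.range (G.subtype ∘ₗ s), ?_, fun x hx => ?_⟩
  · rw [Submodule.disjoint_def]
    rintro _ hxU ⟨y, rfl⟩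
    have hy : y = 0 := by
      rw [← hmkQ_s y, Submodule.mkQ_apply, Submodule.Quotient.mk_eq_zero]
      exact hxU
    simp [hy]
  · have hker : (⟨x, hx⟩ - s (U'.mkQ ⟨x, hx⟩) : G) ∈ U' := by
      rw [← Submodule.Quotient.mk_eq_zero, ← Submodule.mkQ_apply, map_sub, hmkQ_s, sub_self]
    exact Submodule.mem_sup.mpr ⟨_, hker, _, ⟨_, rfl⟩, sub_add_cancel _ _⟩

end Submodule

namespace AddSubmonoid

variable {M : Type*} [AddCommGroup M] {C : AddSubmonoid M} {U V : Submodule ℤ M}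

theorem isPositiveAddSubmonoid_inf_of_disjoint (hCV : Disjoint C.lineal V) :
    IsPositiveAddSubmonoid (C ⊓ V.toAddSubmonoid) := by
  rintro x ⟨hx, hxV⟩ ⟨hnx, -⟩
  exact Submodule.disjoint_def.mp hCV x ⟨hx, hnx⟩ hxV

variable (V) in
def addOfLeLineal (hU : U ≤ C.lineal) : U × ↥(C ⊓ V.toAddSubmonoid) →+ C where
  toFun p := ⟨p.1 + p.2, C.add_mem (hU p.1.2).1 p.2.2.1⟩
  map_zero' := by ext; simp
  map_add' p q := by ext; simp only [Prod.fst_add, Prod.snd_add, Submodule.coe_add,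
    AddSubmonoid.coe_add]; abel

theorem addOfLeLineal_injective (hU : U ≤ C.lineal) (hUV : Disjoint U V) :
    Function.Injective (addOfLeLineal V hU) := by
  rintro ⟨u, w⟩ ⟨u', w'⟩ h
  have h' : (u : M) + w = u' + w' := congrArg Subtype.val h
  have hdiff : (w' : M) - w = u - u' := by
    rw [sub_eq_sub_iff_add_eq_add, add_comm (w' : M), ← h']
  have hw : (w' : M) - w = 0 :=
    Submodule.disjoint_def.mp hUV _ (hdiff ▸ U.sub_mem u.2 u'.2) (V.sub_mem w'.2.2 w.2.2)
  rw [hw, eq_comm, sub_eq_zero] at hdiff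
  rw [sub_eq_zero] at hw
  ext <;> simp [hdiff, hw]

theorem addOfLeLineal_surjective (hU : U ≤ C.lineal) (hCUV : ∀ c ∈ C, c ∈ U ⊔ V) :
    Function.Surjective (addOfLeLineal V hU) := by
  rintro ⟨c, hc⟩
  obtain ⟨u, hu, v, hv, rfl⟩ := Submodule.mem_sup.mp (hCUV c hc)
  have hvC : v ∈ C := by simpa using C.add_mem hc (hU hu).2
  exact ⟨(⟨u, hu⟩, ⟨v, hvC, hv⟩), rfl⟩

end AddSubmonoid

/-- Let `C` be a normal submonoid of `ℤⁿ`.  Then there are `k ∈ ℕ` and a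
positive normal submonoid `C′` of `ℤⁿ` such that `C ≅ ℤ^k ⊕ C′` as additive monoids. -/
theorem normal_submonoid_splits {n : ℕ} (C : AddSubmonoid (Fin n → ℤ))
    (hC : IsNormalAddSubmonoid C) :
    ∃ (k : ℕ) (C' : AddSubmonoid (Fin n → ℤ)),
      IsNormalAddSubmonoid C' ∧ IsPositiveAddSubmonoid C' ∧
      Nonempty (C ≃+ ((Fin k → ℤ) × C')) := by
  let G := (AddSubgroup.closure (C : Set (Fin n → ℤ))).toIntSubmodule
  obtain ⟨V, hUV, hGUV⟩ := Submodule.exists_disjoint_le_sup_of_nsmul_mem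
    (IsNoetherian.noetherian G) fun x hx _ hm => hC.mem_lineal_of_nsmul_mem hx hm
  have hCUV (c) (hc : c ∈ C) : c ∈ C.lineal ⊔ V := hGUV (AddSubgroup.subset_closure hc)
  let split := AddEquiv.ofBijective (C.addOfLeLineal V le_rfl)
    ⟨AddSubmonoid.addOfLeLineal_injective le_rfl hUV,
      AddSubmonoid.addOfLeLineal_surjective le_rfl hCUV⟩
  let linealEquiv := (Module.finBasis ℤ C.lineal).equivFun.toAddEquiv
  exact ⟨Module.finrank ℤ C.lineal, C ⊓ V.toAddSubmonoid, hC.inf V,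
    AddSubmonoid.isPositiveAddSubmonoid_inf_of_disjoint hUV,
    ⟨split.symm.trans (linealEquiv.prodCongr (AddEquiv.refl _))⟩⟩
end

section
/- Let {A_γ}_{γ∈Γ} be a direct system of commutative rings over a directed index set Γ such that for all δ ≤ γ the transition map A_δ → A_γ is pure (for every A_δ-module N, the induced map N → N ⊗_{A_δ} A_γ is injective). If every A_γ is Cohen–Macaulay in the sense of Hamilton–Marley, then the direct limit A = lim→_{γ∈Γ} A_γ is Cohen–Macaulay in the sense of Hamilton–Marley. -/
/-!
A pure map `R → S` reflects solvability of finite linear systems: if `M w = b` has a solution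
over `S`, it has one over `R` (apply purity to `N = coker M`). This property passes from the
transition maps to the canonical maps `A_γ → A`, because any finite system over `A` is already
solved at some stage. It is all one needs to descend each clause of "parameter sequence":
Koszul boundaries, the properness of `(x)`, and primes of `S` over `(x)` that avoid the
image of `R ∖ P`, which exist since `(x)S ∩ R = (x)`. Hence a strong parameter sequence on `A`,
lifted to a stage `γ`, is a strong parameter sequence on every `A_ε` with `ε ≥ γ`, so it is
regular there; and regularity ascends to `A`, since a relation `xₖ a ∈ (x₁, …, xₖ₋₁)` in `A`
already holds at some stage, as does `1 ∈ (x)`.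
-/

open Finset in
/-- Degree `p+1 → p` part of the Koszul complex: the `p`-th module is the free module
on the `p`-element subsets of `Fin ℓ`. -/
noncomputable def koszulD {R : Type*} [CommRing R] {ℓ : ℕ} (x : Fin ℓ → R) (p : ℕ) :
    ({s : Finset (Fin ℓ) // s.card = p + 1} → R) →ₗ[R]
      ({s : Finset (Fin ℓ) // s.card = p} → R) where
  toFun f t := ∑ i ∈ (t.1ᶜ).attach,
    ((-1 : R) ^ ((t.1.filter (fun j => j < i.1)).card)) * x i.1 *
      f ⟨insert i.1 t.1, by
        have hi : (i.1 : Fin ℓ) ∉ t.1 := Finset.mem_compl.mp i.2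
        rw [Finset.card_insert_of_notMem hi, t.2]⟩
  map_add' f g := by
    funext t
    simp only [Pi.add_apply, mul_add, Finset.sum_add_distrib]
  map_smul' c f := by
    funext t
    simp only [Pi.smul_apply, smul_eq_mul, RingHom.id_apply, Finset.mul_sum]
    exact Finset.sum_congr rfl fun i _ => by ring

/-- The standard chain map `K•(x^m) → K•(x^n)` (here `e = m - n`), which in degree `p`
multiplies the component indexed by a subset `s` by `∏_{i ∈ s} x iᵉ`;
it is induced by multiplication by `(x₁⋯x_ℓ)^(m-n)`. -/
noncomputable def koszulTransition {R : Type*} [CommRing R] {ℓ : ℕ} (x : Fin ℓ → R)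
    (e : ℕ) (p : ℕ) :
    ({s : Finset (Fin ℓ) // s.card = p} → R) →ₗ[R]
      ({s : Finset (Fin ℓ) // s.card = p} → R) where
  toFun f t := (∏ i ∈ t.1, x i ^ e) * f t
  map_add' f g := by funext t; simp [mul_add]
  map_smul' c f := by funext t; simp; ring

/-- `x` is weakly proregular: for each `n > 0` there is `m ≥ n` such that the induced maps
`H_i(K•(x^m)) → H_i(K•(x^n))` vanish for all `i ≥ 1`, i.e. every cycle of `K•(x^m)` in
degree `i ≥ 1` is sent to a boundary of `K•(x^n)`. -/
def IsWeakProregular {R : Type*} [CommRing R] {ℓ : ℕ} (x : Fin ℓ → R) : Prop :=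
  ∀ n : ℕ, 0 < n → ∃ m, n ≤ m ∧
    ∀ (i : ℕ) (z : {s : Finset (Fin ℓ) // s.card = i + 1} → R),
      koszulD (fun j => x j ^ m) i z = 0 →
      ∃ w : {s : Finset (Fin ℓ) // s.card = i + 2} → R,
        koszulD (fun j => x j ^ n) (i + 1) w = koszulTransition x (m - n) (i + 1) z

/-- The submodule of boundaries in the top spot `C^ℓ = R_{x₁⋯x_ℓ}` of the Čech complex on
`x₁, …, x_ℓ`: the sum over `j` of the images of the partial localizations
`R_{x₁⋯x̂ⱼ⋯x_ℓ} → R_{x₁⋯x_ℓ}`; the image of the `j`-th one is spanned by the elements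
`(r * xⱼⁿ) / (x₁⋯x_ℓ)ⁿ`. -/
noncomputable def cechTopBoundaries {R : Type*} [CommRing R] {ℓ : ℕ} (x : Fin ℓ → R) :
    Submodule R (Localization.Away (∏ i, x i)) :=
  ⨆ j : Fin ℓ, Submodule.span R
    {z | ∃ (r : R) (n : ℕ), z =
      algebraMap R (Localization.Away (∏ i, x i)) (r * x j ^ n) *
        (IsLocalization.Away.invSelf (S := Localization.Away (∏ i, x i)) (∏ i, x i)) ^ n}

/-- `x₁, …, x_ℓ` is a parameter sequence on `R`: (1) it is weakly proregular,
(2) `(x₁, …, x_ℓ)R ≠ R`, and (3) the localization of the top Čech cohomology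
`H^ℓ_x(R) = R_{x₁⋯x_ℓ} / (Čech boundaries)` at every prime `P ⊇ (x)` is nonzero. -/
def IsParameterSeq {R : Type*} [CommRing R] {ℓ : ℕ} (x : Fin ℓ → R) : Prop :=
  IsWeakProregular x ∧ Ideal.span (Set.range x) ≠ ⊤ ∧
  ∀ P : Ideal R, P.IsPrime → Ideal.span (Set.range x) ≤ P →
    ∃ z : Localization.Away (∏ i, x i), ∀ s ∉ P, s • z ∉ cechTopBoundaries x

/-- `x₁, …, x_ℓ` is a strong parameter sequence: `x₁, …, x_i` is a parameter sequence
for all `1 ≤ i ≤ ℓ`. -/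
def IsStrongParameterSeq {R : Type*} [CommRing R] {ℓ : ℕ} (x : Fin ℓ → R) : Prop :=
  ∀ i : ℕ, ∀ h : i ≤ ℓ, 0 < i → IsParameterSeq (fun j : Fin i => x (Fin.castLE h j))


open scoped TensorProduct in
/-- A ring homomorphism `f : R → S` is *pure* if for every `R`-module `N` the natural map
`N → N ⊗[R] S`, `x ↦ x ⊗ 1`, is injective (where `S` is an `R`-module via `f`). -/
def IsPureRingHom {R S : Type*} [CommRing R] [CommRing S] (f : R →+* S) : Prop :=
  ∀ (N : Type) [AddCommGroup N] [Module R N],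
    Function.Injective
      (fun x : N => @TensorProduct.tmul R _ N S _ _ _ f.toModule x 1)

/-- A commutative ring is *Cohen–Macaulay in the sense of Hamilton–Marley* if every strong
parameter sequence on it is a regular sequence. -/
def IsHamiltonMarleyCohenMacaulay (R : Type*) [CommRing R] : Prop :=
  ∀ (ℓ : ℕ) (x : Fin ℓ → R), IsStrongParameterSeq x →
    RingTheory.Sequence.IsRegular R (List.ofFn x)

open Matrix

def RingHom.ReflectsSolvability {R S : Type*} [CommRing R] [CommRing S] (g : R →+* S) : Prop :=
  ∀ {m n : Type} [Fintype m] [Fintype n] (M : Matrix m n R) (b : m → R),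
    (∃ v, M.map g *ᵥ v = g ∘ b) → ∃ w, M *ᵥ w = b

open TensorProduct in
theorem IsPureRingHom.reflectsSolvability {R S : Type} [CommRing R] [CommRing S]
    {g : R →+* S} (hg : IsPureRingHom g) : g.ReflectsSolvability := by
  classical
  intro m n _ _ M b ⟨v, hv⟩
  let := g.toAlgebra
  let N := (m → R) ⧸ LinearMap.range M.mulVecLin
  -- `Φ : S^m → S ⊗ coker M` kills the columns of `M` and sends `g ∘ b` to `1 ⊗ [b]`.
  let Φ : (m → S) →ₗ[S] S ⊗[R] N :=
    (LinearMap.range M.mulVecLin).mkQ.baseChange S ∘ₗ (piScalarRight R S S m).symm.toLinearMap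
  have hΦ : ∀ c : m → R, Φ (g ∘ c) = 1 ⊗ₜ Submodule.Quotient.mk c := fun c =>
    congrArg ((LinearMap.range M.mulVecLin).mkQ.baseChange S)
      (piScalarRight_symm_algebraMap R S m c)
  have hΦM : Φ ∘ₗ (M.map g).mulVecLin = 0 := by
    ext j
    have hcol : (M.map g).mulVecLin (Pi.single j 1) = g ∘ (M *ᵥ Pi.single j 1) := by
      ext i
      simp
    have hcol_zero : (Submodule.Quotient.mk (M.col j) : N) = 0 :=
      (Submodule.Quotient.mk_eq_zero _).mpr ⟨Pi.single j 1, by simp⟩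
    simp [hcol, hΦ, hcol_zero]
  have hb : (Submodule.Quotient.mk b : N) ⊗ₜ[R] (1 : S) = 0 := by
    rw [← TensorProduct.comm_symm_tmul, ← hΦ, ← hv, ← Matrix.mulVecLin_apply,
      ← LinearMap.comp_apply, hΦM, LinearMap.zero_apply, map_zero]
  have hb_zero : (Submodule.Quotient.mk b : N) = 0 := hg N (by simpa using hb)
  exact (Submodule.Quotient.mk_eq_zero _).mp hb_zero

theorem Ideal.mem_span_range_iff_exists_replicateRow_mulVec {R : Type*} [CommRing R] {n : Type}
    [Fintype n] (z : n → R) (s : R) :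
    s ∈ Ideal.span (Set.range z) ↔ ∃ c, replicateRow Unit z *ᵥ c = fun _ => s := by
  simp [Ideal.mem_span_range_iff_exists_fun, replicateRow_mulVec_eq_const, funext_iff,
    dotProduct, mul_comm]

namespace RingHom.ReflectsSolvability

variable {R S : Type*} [CommRing R] [CommRing S] {g : R →+* S}

theorem exists_linearMap_eq (hg : g.ReflectsSolvability) {m n : Type} [Fintype m] [Fintype n]
    [DecidableEq n] (d : (n → R) →ₗ[R] (m → R)) (d' : (n → S) →ₗ[S] (m → S))
    (hd : ∀ u, d' (g ∘ u) = g ∘ d u) {b : m → R} (hb : ∃ v, d' v = g ∘ b) :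
    ∃ w, d w = b := by
  have hmat : (LinearMap.toMatrix' d).map g = LinearMap.toMatrix' d' := by
    ext i j
    have hsingle : g ∘ Pi.single j 1 = Pi.single j 1 := by
      ext k
      by_cases hk : k = j
      · subst hk; simp
      · simp [hk]
    simp [LinearMap.toMatrix'_apply, ← hsingle, hd]
  simpa [← hmat, LinearMap.toMatrix'_mulVec] using hg (LinearMap.toMatrix' d) b
    (by simpa [hmat, LinearMap.toMatrix'_mulVec] using hb)

theorem mem_of_map_mem_map (hg : g.ReflectsSolvability) {I : Ideal R} (hI : I.FG) {s : R}
    (hs : g s ∈ I.map g) : s ∈ I := by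
  obtain ⟨n, z, rfl⟩ := Submodule.fg_iff_exists_fin_generating_family.mp hI
  rw [← Ideal.span, Ideal.map_span, ← Set.range_comp,
    Ideal.mem_span_range_iff_exists_replicateRow_mulVec] at hs
  rw [← Ideal.span, Ideal.mem_span_range_iff_exists_replicateRow_mulVec]
  exact hg _ _ hs

theorem exists_isPrime_map_le_of_le (hg : g.ReflectsSolvability) {I P : Ideal R} (hI : I.FG)
    [P.IsPrime] (hIP : I ≤ P) : ∃ Q : Ideal S, Q.IsPrime ∧ I.map g ≤ Q ∧ ∀ s ∉ P, g s ∉ Q := by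
  have hdisj : Disjoint (I.map g : Set S) (P.primeCompl.map g) := by
    refine Set.disjoint_left.mpr ?_
    rintro _ hsI ⟨s, hsP, rfl⟩
    exact hsP (hIP (hg.mem_of_map_mem_map hI hsI))
  obtain ⟨Q, hQ, hIQ, hQP⟩ := Ideal.exists_le_prime_disjoint _ _ hdisj
  exact ⟨Q, hQ, hIQ, fun s hs hsQ => Set.disjoint_left.mp hQP hsQ ⟨s, hs, rfl⟩⟩

end RingHom.ReflectsSolvability

section Koszul

variable {R S : Type*} [CommRing R] [CommRing S] (g : R →+* S) {ℓ : ℕ} {x : Fin ℓ → R}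
  {x' : Fin ℓ → S}

theorem koszulD_map (hx : ∀ j, g (x j) = x' j) (p : ℕ)
    (v : {s : Finset (Fin ℓ) // s.card = p + 1} → R) :
    koszulD x' p (g ∘ v) = g ∘ koszulD x p v := by
  funext t
  simp [koszulD, ← hx]

theorem koszulTransition_map (hx : ∀ j, g (x j) = x' j) (e p : ℕ)
    (v : {s : Finset (Fin ℓ) // s.card = p} → R) :
    koszulTransition x' e p (g ∘ v) = g ∘ koszulTransition x e p v := by
  funext t
  simp [koszulTransition, ← hx]

end Koszul

theorem IsWeakProregular.of_map {R S : Type*} [CommRing R] [CommRing S] {g : R →+* S}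
    (hg : g.ReflectsSolvability) {ℓ : ℕ} {y : Fin ℓ → R} (h : IsWeakProregular (g ∘ y)) :
    IsWeakProregular y := by
  intro n hn
  obtain ⟨m, hnm, hm⟩ := h n hn
  refine ⟨m, hnm, fun i z hz => ?_⟩
  have hcycle : koszulD (fun j => (g ∘ y) j ^ m) i (g ∘ z) = 0 := by
    rw [koszulD_map g (x' := fun j => (g ∘ y) j ^ m) (fun j => map_pow g (y j) m), hz]
    ext
    simp
  obtain ⟨w, hw⟩ := hm i (g ∘ z) hcycle
  refine hg.exists_linearMap_eq _ _
    (koszulD_map g (x' := fun j => (g ∘ y) j ^ n) (fun j => map_pow g (y j) n) (i + 1)) ⟨w, ?_⟩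
  rw [hw, koszulTransition_map g (x' := g ∘ y) (fun j => rfl)]

section CechTop

variable {R S : Type*} [CommRing R] [CommRing S] (g : R →+* S) {ℓ : ℕ} (y : Fin ℓ → R)

noncomputable def awayProdMap :
    Localization.Away (∏ i, y i) →+* Localization.Away (∏ i, (g ∘ y) i) :=
  IsLocalization.Away.lift (∏ i, y i) (g := (algebraMap S _).comp g) <| by
    simpa [map_prod] using IsLocalization.Away.algebraMap_isUnit
      (S := Localization.Away (∏ i, (g ∘ y) i)) (∏ i, (g ∘ y) i)

theorem awayProdMap_algebraMap (a : R) :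
    awayProdMap g y (algebraMap R _ a) = algebraMap S _ (g a) :=
  IsLocalization.Away.lift_eq ..

theorem awayProdMap_invSelf :
    awayProdMap g y (IsLocalization.Away.invSelf (∏ i, y i)) =
      IsLocalization.Away.invSelf (∏ i, (g ∘ y) i) := by
  have h := congrArg (awayProdMap g y)
    (IsLocalization.Away.mul_invSelf (S := Localization.Away (∏ i, y i)) (∏ i, y i))
  rw [map_mul, map_one, awayProdMap_algebraMap, map_prod, mul_comm] at h
  exact left_inv_eq_right_inv h
    (IsLocalization.Away.mul_invSelf (S := Localization.Away (∏ i, (g ∘ y) i)) (∏ i, (g ∘ y) i))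

theorem awayProdMap_smul (s : R) (v : Localization.Away (∏ i, y i)) :
    awayProdMap g y (s • v) = g s • awayProdMap g y v := by
  rw [Algebra.smul_def, map_mul, awayProdMap_algebraMap, ← Algebra.smul_def]

theorem awayProdMap_mem_cechTopBoundaries {v : Localization.Away (∏ i, y i)}
    (hv : v ∈ cechTopBoundaries y) : awayProdMap g y v ∈ cechTopBoundaries (g ∘ y) := by
  unfold cechTopBoundaries at hv ⊢
  rw [← Submodule.span_iUnion] at hv ⊢
  induction hv using Submodule.span_induction with
  | mem z hz =>
    obtain ⟨j, r, n, rfl⟩ := Set.mem_iUnion.mp hz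
    refine Submodule.subset_span (Set.mem_iUnion.mpr ⟨j, g r, n, ?_⟩)
    rw [map_mul, awayProdMap_algebraMap, map_pow, awayProdMap_invSelf, map_mul, map_pow]
    rfl
  | zero => simp
  | add a b _ _ ha hb => rw [map_add]; exact Submodule.add_mem _ ha hb
  | smul r a _ ha => rw [awayProdMap_smul]; exact Submodule.smul_mem _ _ ha

end CechTop

section Descent

variable {R S : Type*} [CommRing R] [CommRing S] {g : R →+* S} {ℓ : ℕ} {y : Fin ℓ → R}

theorem IsParameterSeq.of_map (hg : g.ReflectsSolvability) (h : IsParameterSeq (g ∘ y)) :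
    IsParameterSeq y := by
  obtain ⟨hwpr, hproper, hsupp⟩ := h
  have hspan : Ideal.span (Set.range (g ∘ y)) = (Ideal.span (Set.range y)).map g := by
    rw [Ideal.map_span, Set.range_comp]
  refine ⟨hwpr.of_map hg, fun htop => hproper (by rw [hspan, htop, Ideal.map_top]),
    fun P hP hyP => ?_⟩
  obtain ⟨Q, hQ, hyQ, hPQ⟩ :=
    hg.exists_isPrime_map_le_of_le (Submodule.fg_span (Set.finite_range y)) hyP
  obtain ⟨zS, hzS⟩ := hsupp Q hQ (hspan ▸ hyQ)
  obtain ⟨n, a, ha⟩ := IsLocalization.Away.surj (∏ i, (g ∘ y) i) zS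
  have hzS_eq : zS = a • IsLocalization.Away.invSelf (∏ i, (g ∘ y) i) ^ n := by
    rw [Algebra.smul_def, ← ha, mul_assoc, ← mul_pow, IsLocalization.Away.mul_invSelf,
      one_pow, mul_one]
  -- The witness `a / (∏ g yᵢ)ⁿ` for `Q` gives the witness `1 / (∏ yᵢ)ⁿ` for `P`.
  refine ⟨IsLocalization.Away.invSelf (∏ i, y i) ^ n, fun s hs hmem => hzS (g s) (hPQ s hs) ?_⟩
  have himage := awayProdMap_mem_cechTopBoundaries g y hmem
  rw [awayProdMap_smul, map_pow, awayProdMap_invSelf] at himage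
  rw [hzS_eq, smul_comm]
  exact Submodule.smul_mem _ _ himage

theorem IsStrongParameterSeq.of_map (hg : g.ReflectsSolvability)
    (h : IsStrongParameterSeq (g ∘ y)) : IsStrongParameterSeq y :=
  fun i hi hpos => (h i hi hpos).of_map hg

end Descent

section Regular

open RingTheory.Sequence

variable {R : Type*} [CommRing R] {ℓ : ℕ}

theorem ofList_take_ofFn (x : Fin ℓ → R) (k : Fin ℓ) :
    Ideal.ofList ((List.ofFn x).take k) = Ideal.span (x '' Set.Iio k) := by
  rw [← Fin.ofFn_take_eq_take_ofFn k.is_lt.le]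
  unfold Ideal.ofList
  congr 1
  ext r
  simp only [Set.mem_ofPred_eq, List.mem_ofFn, Fin.take_apply, Set.mem_image,
    Set.mem_Iio]
  constructor
  · rintro ⟨j, rfl⟩
    exact ⟨_, Fin.lt_def.mpr j.is_lt, rfl⟩
  · rintro ⟨j, hj, rfl⟩
    exact ⟨⟨j, hj⟩, rfl⟩

theorem isWeaklyRegular_ofFn_iff (x : Fin ℓ → R) :
    IsWeaklyRegular R (List.ofFn x) ↔
      ∀ k (a : R), x k * a ∈ Ideal.span (x '' Set.Iio k) → a ∈ Ideal.span (x '' Set.Iio k) := by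
  simp only [isWeaklyRegular_iff, List.length_ofFn, List.getElem_ofFn,
    isSMulRegular_quotient_iff_mem_of_smul_mem, smul_eq_mul, Ideal.mul_top]
  constructor
  · intro h k
    simpa only [ofList_take_ofFn] using h k k.2
  · intro h i hi
    simpa only [← ofList_take_ofFn x ⟨i, hi⟩] using h ⟨i, hi⟩

theorem isRegular_ofFn_iff (x : Fin ℓ → R) :
    IsRegular R (List.ofFn x) ↔
      IsWeaklyRegular R (List.ofFn x) ∧ Ideal.span (Set.range x) ≠ ⊤ := by
  have hspan : Ideal.ofList (List.ofFn x) = Ideal.span (Set.range x) := by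
    simp only [Ideal.ofList, List.mem_ofFn]
    rfl
  rw [RingTheory.Sequence.isRegular_iff, smul_eq_mul, Ideal.mul_top, hspan, ne_comm]

end Regular

namespace Ring.DirectLimit

variable {ι : Type*} [Preorder ι] [IsDirected ι (· ≤ ·)] [Nonempty ι] {G : ι → Type*}
  [∀ i, CommRing (G i)] {f : ∀ i j : ι, i ≤ j → G i →+* G j}
  [DirectedSystem G (f · · ·)]

omit [IsDirected ι (· ≤ ·)] [Nonempty ι] [DirectedSystem G (f · · ·)] in
theorem of_comp_f {i j : ι} (hij : i ≤ j) :
    (of G (f · · ·) j).comp (f i j hij) = of G (f · · ·) i :=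
  RingHom.ext (of_f hij)

omit [IsDirected ι (· ≤ ·)] [Nonempty ι] in
theorem f_comp_f {i j k : ι} (hij : i ≤ j) (hjk : j ≤ k) :
    (f j k hjk).comp (f i j hij) = f i k (hij.trans hjk) :=
  RingHom.ext (DirectedSystem.map_map' f hij hjk)

omit [DirectedSystem G (f · · ·)] in
theorem exists_of_comp_eq {κ : Type*} [Finite κ] (v : κ → Ring.DirectLimit G (f · · ·))
    (i : ι) : ∃ j, ∃ _ : i ≤ j, ∃ w : κ → G j, of G (f · · ·) j ∘ w = v := by
  choose s w hw using fun k => exists_of (v k)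
  obtain ⟨j, hj⟩ := Finite.exists_le fun o : Option κ => o.elim i s
  exact ⟨j, hj none, fun k => f (s k) j (hj (some k)) (w k),
    funext fun k => (of_f _ _).trans (hw k)⟩

theorem exists_f_comp_eq {κ : Type*} [Finite κ] {i : ι} {a b : κ → G i}
    (h : of G (f · · ·) i ∘ a = of G (f · · ·) i ∘ b) :
    ∃ j, ∃ hij : i ≤ j, f i j hij ∘ a = f i j hij ∘ b := by
  have hzero k : of G (f · · ·) i (a k - b k) = 0 := by
    rw [map_sub, sub_eq_zero]
    exact congrFun h k
  choose s hs hsab using fun k => of.zero_exact (hzero k)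
  obtain ⟨j, hj⟩ := Finite.exists_le fun o : Option κ => o.elim i s
  refine ⟨j, hj none, funext fun k => ?_⟩
  have hk := DirectedSystem.map_map' f (hs k) (hj (some k)) (a k - b k)
  rwa [hsab k, map_zero, eq_comm, map_sub, sub_eq_zero] at hk

theorem exists_mulVec_eq_of_exists {m n : Type} [Fintype m] [Fintype n] {i : ι}
    (M : Matrix m n (G i)) (b : m → G i)
    (h : ∃ v, M.map (of G (f · · ·) i) *ᵥ v = of G (f · · ·) i ∘ b) :
    ∃ j, ∃ hij : i ≤ j, ∃ w, M.map (f i j hij) *ᵥ w = f i j hij ∘ b := by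
  obtain ⟨v, hv⟩ := h
  obtain ⟨j, hij, w, rfl⟩ := exists_of_comp_eq v i
  have hj : of G (f · · ·) j ∘ (M.map (f i j hij) *ᵥ w) = of G (f · · ·) j ∘ (f i j hij ∘ b) := by
    ext t
    simpa [RingHom.map_mulVec, Matrix.map_map, ← RingHom.coe_comp, of_comp_f] using congrFun hv t
  obtain ⟨k, hjk, hk⟩ := exists_f_comp_eq hj
  refine ⟨k, hij.trans hjk, f j k hjk ∘ w, ?_⟩
  ext t
  simpa [RingHom.map_mulVec, Matrix.map_map, ← RingHom.coe_comp, f_comp_f,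
    DirectedSystem.map_map' f hij hjk] using congrFun hk t

theorem reflectsSolvability_of (hf : ∀ i j hij, (f i j hij).ReflectsSolvability) (i : ι) :
    (of G (f · · ·) i).ReflectsSolvability := fun M b hb =>
  let ⟨j, hij, hw⟩ := exists_mulVec_eq_of_exists M b hb
  hf i j hij M b hw

theorem exists_mem_map_of_mem_map {i : ι} {I : Ideal (G i)} (hI : I.FG) {b : G i}
    (hb : of G (f · · ·) i b ∈ I.map (of G (f · · ·) i)) :
    ∃ j, ∃ hij : i ≤ j, f i j hij b ∈ I.map (f i j hij) := by
  obtain ⟨n, z, rfl⟩ := Submodule.fg_iff_exists_fin_generating_family.mp hI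
  rw [← Ideal.span] at hb ⊢
  simp only [Ideal.map_span, ← Set.range_comp,
    Ideal.mem_span_range_iff_exists_replicateRow_mulVec] at hb ⊢
  exact exists_mulVec_eq_of_exists _ _ hb

theorem of_mem_map_of_iff {γ ε : ι} (hγε : γ ≤ ε) {I : Ideal (G γ)} (hI : I.FG) (b : G ε) :
    of G (f · · ·) ε b ∈ I.map (of G (f · · ·) γ) ↔
      ∃ ε', ∃ hεε' : ε ≤ ε', f ε ε' hεε' b ∈ I.map (f γ ε' (hγε.trans hεε')) := by
  have hmap {ε'} (hγε' : γ ≤ ε') :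
      I.map (of G (f · · ·) γ) = (I.map (f γ ε' hγε')).map (of G (f · · ·) ε') := by
    rw [Ideal.map_map, of_comp_f]
  constructor
  · intro hb
    rw [hmap hγε] at hb
    obtain ⟨ε', hεε', hmem⟩ := exists_mem_map_of_mem_map (hI.map _) hb
    rw [Ideal.map_map, f_comp_f] at hmem
    exact ⟨ε', hεε', hmem⟩
  · rintro ⟨ε', hεε', hmem⟩
    rw [hmap (hγε.trans hεε'), ← of_f hεε']
    exact Ideal.mem_map_of_mem _ hmem

theorem isRegular_ofFn_of {γ : ι} {ℓ : ℕ} (y : Fin ℓ → G γ)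
    (hy : ∀ ε (hγε : γ ≤ ε), RingTheory.Sequence.IsRegular (G ε) (List.ofFn (f γ ε hγε ∘ y))) :
    RingTheory.Sequence.IsRegular (Ring.DirectLimit G (f · · ·))
      (List.ofFn (of G (f · · ·) γ ∘ y)) := by
  rw [isRegular_ofFn_iff, isWeaklyRegular_ofFn_iff]
  refine ⟨fun k a ha => ?_, fun htop => ?_⟩
  · have hI : (Ideal.span (y '' Set.Iio k)).FG := Submodule.fg_span ((Set.toFinite _).image y)
    obtain ⟨i, a₀, rfl⟩ := exists_of a
    obtain ⟨ε, hγε, hiε⟩ := exists_ge_ge γ i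
    rw [Set.image_comp, ← Ideal.map_span, ← of_f hiε] at ha ⊢
    rw [Function.comp_apply, ← of_f hγε, ← map_mul, of_mem_map_of_iff hγε hI] at ha
    obtain ⟨ε', hεε', hmem⟩ := ha
    rw [map_mul, DirectedSystem.map_map' f, Ideal.map_span, ← Set.image_comp] at hmem
    have hreg := (isWeaklyRegular_ofFn_iff _).mp ((isRegular_ofFn_iff _).mp (hy ε' _)).1 k _ hmem
    rw [Set.image_comp, ← Ideal.map_span] at hreg
    exact (of_mem_map_of_iff hγε hI _).mpr ⟨ε', hεε', hreg⟩
  · have hone : of G (f · · ·) γ 1 ∈ (Ideal.span (Set.range y)).map (of G (f · · ·) γ) := by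
      rw [Ideal.map_span, ← Set.range_comp, htop]
      trivial
    obtain ⟨ε, hγε, hmem⟩ :=
      exists_mem_map_of_mem_map (Submodule.fg_span (Set.finite_range y)) hone
    rw [map_one, Ideal.map_span, ← Set.range_comp, ← Ideal.eq_top_iff_one] at hmem
    exact ((isRegular_ofFn_iff _).mp (hy ε hγε)).2 hmem

end Ring.DirectLimit

/-- Let `{A_γ}` be a direct system of commutative rings over a directed
index set with pure transition maps.  If every `A_γ` is Cohen–Macaulay in the sense of
Hamilton–Marley, then so is the direct limit. -/
theorem directLimit_hamiltonMarley_cohenMacaulay_of_pure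
    {ι : Type} [Preorder ι] [IsDirected ι (· ≤ ·)] [Nonempty ι]
    (G : ι → Type) [∀ i, CommRing (G i)]
    (f : ∀ i j : ι, i ≤ j → G i →+* G j)
    (hsys : DirectedSystem G (fun _ _ h => f _ _ h))
    (hpure : ∀ (i j : ι) (h : i ≤ j), IsPureRingHom (f i j h))
    (hCM : ∀ i, IsHamiltonMarleyCohenMacaulay (G i)) :
    IsHamiltonMarleyCohenMacaulay (Ring.DirectLimit G (fun i j h => f i j h)) := by
  intro ℓ x hx
  obtain ⟨γ, -, y, rfl⟩ := Ring.DirectLimit.exists_of_comp_eq x (Classical.arbitrary ι)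
  refine Ring.DirectLimit.isRegular_ofFn_of y fun ε hγε => hCM ε ℓ _ ?_
  refine IsStrongParameterSeq.of_map (Ring.DirectLimit.reflectsSolvability_of
    (fun i j hij => (hpure i j hij).reflectsSolvability) ε) ?_
  rwa [← Function.comp_assoc, ← RingHom.coe_comp, Ring.DirectLimit.of_comp_f]
end
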